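/- arXiv:1910.13572 — 6 statements merged into one kernel-verified Lean document; each statement's English description precedes it below -/
import Mathlib

section
/- In Aut(W_n), two partial conjugations x_{i,D_i} and x_{j,D_j} with distinct acting letters i ≠ j commute if any of the following disjointness conditions holds, where D̃ = D ∪ {acting letter}: (D_i ∪ {i}) ∩ (D_j ∪ {j}) = ∅, or (D_i^c ∪ {i}) ∩ (D_j ∪ {j}) = ∅, or (D_i ∪ {i}) ∩ (D_j^c ∪ {j}) = ∅, where D^c = [n] ∖ (D ∪ {acting letter}). -/
/-- Defining relations of `Wₙ`: each generator squares to the identity. -/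
def wrels (n : ℕ) : Set (FreeGroup (Fin n)) :=
  {r | ∃ i : Fin n, r = FreeGroup.of i * FreeGroup.of i}

/-- The universal right-angled Coxeter group `Wₙ`. -/
abbrev W (n : ℕ) := PresentedGroup (wrels n)

/-- The generator `aᵢ` of `Wₙ`. -/
def gen {n : ℕ} (i : Fin n) : W n := PresentedGroup.of i

/-- `φ` is the partial conjugation with acting letter `aᵢ` and domain `D`. -/
def IsPC {n : ℕ} (φ : W n ≃* W n) (i : Fin n) (D : Finset (Fin n)) : Prop :=
  (∀ j ∈ D, φ (gen j) = gen i * gen j * gen i) ∧ (∀ j ∉ D, φ (gen j) = gen j)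

/-! Both automorphisms are determined by their values on the generators, so it suffices to
compare `φ (ψ a_k)` with `ψ (φ a_k)`. If only one of them moves `a_k`, the other fixes `a_k` and
the first one's acting letter. If both move `a_k`, the disjointness conditions force, up to
symmetry, `Dⱼ ∪ {j} ⊆ Dᵢ` and `i ∉ Dⱼ`, and since `aᵢ² = 1` both composites send `a_k` to
`aᵢ aⱼ a_k aⱼ aᵢ`. -/

theorem Finset.subset_and_notMem_of_insert_compl_inter_eq_empty {α : Type*} [Fintype α]
    [DecidableEq α] {a : α} {s t : Finset α} (h : insert a (insert a s)ᶜ ∩ t = ∅) :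
    t ⊆ s ∧ a ∉ t := by
  simp only [Finset.eq_empty_iff_forall_notMem, Finset.mem_inter, Finset.mem_insert,
    Finset.mem_compl] at h
  exact ⟨fun x hx => by by_contra hxs; exact h x ⟨by tauto, hx⟩, fun ha => h a ⟨by simp, ha⟩⟩

variable {n : ℕ}

theorem gen_mul_gen_self (i : Fin n) : gen i * gen i = 1 :=
  (QuotientGroup.eq_one_iff _).mpr (Subgroup.subset_normalClosure ⟨i, rfl⟩)

theorem gen_mul_gen_self_mul (i : Fin n) (x : W n) : gen i * (gen i * x) = x := by
  rw [← mul_assoc, gen_mul_gen_self, one_mul]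

theorem MulAut.commute_of_forall_gen {φ ψ : MulAut (W n)}
    (h : ∀ k, φ (ψ (gen k)) = ψ (φ (gen k))) : Commute φ ψ :=
  MulEquiv.toMonoidHom_injective (PresentedGroup.ext h)

namespace IsPC

variable {φ ψ : W n ≃* W n} {i j k : Fin n} {Di Dj : Finset (Fin n)}

theorem map_map_gen_of_notMem (hφ : IsPC φ i Di) (hψ : IsPC ψ j Dj) (hki : k ∉ Di)
    (hkj : k ∉ Dj) : φ (ψ (gen k)) = ψ (φ (gen k)) := by
  rw [hψ.2 k hkj, hφ.2 k hki, hψ.2 k hkj]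

theorem map_map_gen_of_mem_of_notMem (hφ : IsPC φ i Di) (hψ : IsPC ψ j Dj) (hki : k ∈ Di)
    (hkj : k ∉ Dj) (hij : i ∉ Dj) : φ (ψ (gen k)) = ψ (φ (gen k)) := by
  rw [hψ.2 k hkj, hφ.1 k hki, map_mul, map_mul, hψ.2 i hij, hψ.2 k hkj]

theorem map_map_gen_of_mem_of_mem (hφ : IsPC φ i Di) (hψ : IsPC ψ j Dj) (hki : k ∈ Di)
    (hkj : k ∈ Dj) (hji : j ∈ Di) (hij : i ∉ Dj) : φ (ψ (gen k)) = ψ (φ (gen k)) := by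
  rw [hψ.1 k hkj, hφ.1 k hki, map_mul, map_mul, map_mul, map_mul, hφ.1 j hji, hφ.1 k hki,
    hψ.2 i hij, hψ.1 k hkj]
  simp only [mul_assoc, gen_mul_gen_self_mul]

theorem commute_of_disjoint (hφ : IsPC φ i Di) (hψ : IsPC ψ j Dj)
    (h : Disjoint (insert i Di) (insert j Dj)) : Commute (φ : MulAut (W n)) ψ := by
  have hij : i ∉ Dj := fun hi => Finset.disjoint_left.mp h (Finset.mem_insert_self i Di)
    (Finset.mem_insert_of_mem hi)
  have hji : j ∉ Di := fun hj => Finset.disjoint_right.mp h (Finset.mem_insert_self j Dj)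
    (Finset.mem_insert_of_mem hj)
  refine MulAut.commute_of_forall_gen fun k => ?_
  by_cases hki : k ∈ Di
  · have hkj : k ∉ Dj := fun hk => Finset.disjoint_left.mp h (Finset.mem_insert_of_mem hki)
      (Finset.mem_insert_of_mem hk)
    exact hφ.map_map_gen_of_mem_of_notMem hψ hki hkj hij
  by_cases hkj : k ∈ Dj
  · exact (hψ.map_map_gen_of_mem_of_notMem hφ hkj hki hji).symm
  · exact hφ.map_map_gen_of_notMem hψ hki hkj

theorem commute_of_insert_subset (hφ : IsPC φ i Di) (hψ : IsPC ψ j Dj)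
    (h : insert j Dj ⊆ Di) (hi : i ∉ insert j Dj) : Commute (φ : MulAut (W n)) ψ := by
  have hji : j ∈ Di := h (Finset.mem_insert_self j Dj)
  have hij : i ∉ Dj := fun hi' => hi (Finset.mem_insert_of_mem hi')
  refine MulAut.commute_of_forall_gen fun k => ?_
  by_cases hkj : k ∈ Dj
  · exact hφ.map_map_gen_of_mem_of_mem hψ (h (Finset.mem_insert_of_mem hkj)) hkj hji hij
  by_cases hki : k ∈ Di
  · exact hφ.map_map_gen_of_mem_of_notMem hψ hki hkj hij
  · exact hφ.map_map_gen_of_notMem hψ hki hkj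

end IsPC

theorem stmt5_general (n : ℕ) (i j : Fin n) (Di Dj : Finset (Fin n))
    (φ ψ : W n ≃* W n) (hφ : IsPC φ i Di) (hψ : IsPC ψ j Dj)
    (hdisj :
      insert i Di ∩ insert j Dj = ∅ ∨
      insert i ((insert i Di)ᶜ) ∩ insert j Dj = ∅ ∨
      insert i Di ∩ insert j ((insert j Dj)ᶜ) = ∅) :
    ∀ w : W n, φ (ψ w) = ψ (φ w) := by
  have hcomm : Commute (φ : MulAut (W n)) ψ := by
    rcases hdisj with h | h | h
    · exact hφ.commute_of_disjoint hψ (Finset.disjoint_iff_inter_eq_empty.mpr h)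
    · obtain ⟨hsub, hi⟩ := Finset.subset_and_notMem_of_insert_compl_inter_eq_empty h
      exact hφ.commute_of_insert_subset hψ hsub hi
    · rw [Finset.inter_comm] at h
      obtain ⟨hsub, hj⟩ := Finset.subset_and_notMem_of_insert_compl_inter_eq_empty h
      exact (hψ.commute_of_insert_subset hφ hsub hj).symm
  exact fun w => DFunLike.congr_fun hcomm.eq w

/-- Commuting criterion (Gutierrez–Piggott–Ruane): two partial conjugations
`x_{i,Dᵢ}` and `x_{j,Dⱼ}` with distinct acting letters commute whenever one of the
disjointness conditions `D̃ᵢ ∩ D̃ⱼ = ∅`, `D̃ᵢᶜ ∩ D̃ⱼ = ∅`, or `D̃ᵢ ∩ D̃ⱼᶜ = ∅` holds,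
where `D̃ = D ∪ {acting letter}` and `Dᶜ = [n] ∖ (D ∪ {acting letter})`. -/
theorem stmt5 (n : ℕ) (i j : Fin n) (Di Dj : Finset (Fin n)) (hij : i ≠ j)
    (hi : i ∉ Di) (hj : j ∉ Dj)
    (φ ψ : W n ≃* W n) (hφ : IsPC φ i Di) (hψ : IsPC ψ j Dj)
    (hdisj :
      insert i Di ∩ insert j Dj = ∅ ∨
      insert i ((insert i Di)ᶜ) ∩ insert j Dj = ∅ ∨
      insert i Di ∩ insert j ((insert j Dj)ᶜ) = ∅) :
    ∀ w : W n, φ (ψ w) = ψ (φ w) :=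
  stmt5_general n i j Di Dj φ ψ hφ hψ hdisj
end

section
/- Partial conjugations x_{1,D_1} and x_{2,D_2} of W_n with acting letters 1 ≠ 2, satisfying 1 ∉ D_2, 2 ∉ D_1, and D_1 ∩ D_2 = ∅, commute in Aut(W_n). -/
/-- Partial conjugations `x_{1,D₁}` and `x_{2,D₂}` with acting letters the first and
second generators (which are distinct), satisfying `1 ∉ D₂`, `2 ∉ D₁` and
`D₁ ∩ D₂ = ∅`, commute in `Aut(Wₙ)`.  (Here the letters `1` and `2` of `[n]` are the
indices `0` and `1` of `Fin n`.) -/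
theorem stmt6 (n : ℕ) (hn : 2 ≤ n) (D1 D2 : Finset (Fin n))
    (φ ψ : W n ≃* W n)
    (h1 : IsPC φ ⟨0, by omega⟩ D1) (h2 : IsPC ψ ⟨1, by omega⟩ D2)
    (h1self : (⟨0, by omega⟩ : Fin n) ∉ D1) (h2self : (⟨1, by omega⟩ : Fin n) ∉ D2)
    (h1in2 : (⟨0, by omega⟩ : Fin n) ∉ D2) (h2in1 : (⟨1, by omega⟩ : Fin n) ∉ D1)
    (hdisj : D1 ∩ D2 = ∅) :
    ∀ w : W n, φ (ψ w) = ψ (φ w) := by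
  have key : ∀ j : Fin n, φ (ψ (gen j)) = ψ (φ (gen j)) := by
    intro j
    by_cases hj1 : j ∈ D1
    · have hj2 : j ∉ D2 := fun hj2 => by
        have : j ∈ D1 ∩ D2 := Finset.mem_inter.mpr ⟨hj1, hj2⟩
        simp [hdisj] at this
      rw [h2.2 j hj2, h1.1 j hj1, map_mul, map_mul, h2.2 _ h1in2, h2.2 j hj2]
    · by_cases hj2 : j ∈ D2
      · rw [h1.2 j hj1, h2.1 j hj2, map_mul, map_mul, h1.2 _ h2in1, h1.2 j hj1]
      · rw [h2.2 j hj2, h1.2 j hj1, h2.2 j hj2]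
  intro w
  have hw : w ∈ Subgroup.closure (Set.range (gen (n := n))) := by
    have := PresentedGroup.closure_range_of (wrels n)
    rw [show Set.range (gen (n := n)) = Set.range PresentedGroup.of from rfl, this]
    trivial
  induction hw using Subgroup.closure_induction with
  | mem x hx => obtain ⟨j, rfl⟩ := hx; exact key j
  | one => simp
  | mul x y _ _ hx hy => simp [map_mul, hx, hy]
  | inv x _ hx => simp [map_inv, hx]
end

section
/- If Θ' is obtained from a hypertree Θ by a single fold (replacing two intersecting hyperedges e, e' with their union e ∪ e'), then Θ' is again a hypertree. -/
/-- A hypergraph on `[n]`, identified with its set of hyperedges: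
every hyperedge has at least two vertices. -/
def IsHypergraph {n : ℕ} (E : Finset (Finset (Fin n))) : Prop :=
  ∀ e ∈ E, 2 ≤ e.card

/-- Data of a walk: a length `len`, a sequence of `len + 1` vertices and
`len` hyperedges. -/
structure WalkData (n : ℕ) where
  len : ℕ
  verts : Fin (len + 1) → Fin n
  eds : Fin len → Finset (Fin n)

/-- `s` is a simple walk from `v` to `w` in the hypergraph `E`: an alternating
sequence of pairwise distinct vertices and pairwise distinct hyperedges
`v = v₀, e₁, v₁, …, e_p, v_p = w` with `{vₖ, vₖ₊₁} ⊆ eₖ₊₁`. -/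
def IsSimpleWalk {n : ℕ} (E : Finset (Finset (Fin n))) (v w : Fin n)
    (s : WalkData n) : Prop :=
  s.verts 0 = v ∧ s.verts (Fin.last s.len) = w ∧
  Function.Injective s.verts ∧ Function.Injective s.eds ∧
  ∀ k : Fin s.len, s.eds k ∈ E ∧ s.verts k.castSucc ∈ s.eds k ∧ s.verts k.succ ∈ s.eds k

/-- A hypertree: a hypergraph in which any two vertices are joined by a unique
simple walk. -/
def IsHypertree {n : ℕ} (E : Finset (Finset (Fin n))) : Prop :=
  IsHypergraph E ∧ ∀ v w : Fin n, ∃! s : WalkData n, IsSimpleWalk E v w s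

/-!
A hypergraph is encoded by its incidence graph, the bipartite graph between its vertices and its
hyperedges. Simple walks of the hypergraph are exactly the paths of the incidence graph between
vertex nodes, so (all hyperedges being nonempty) a hypergraph is a hypertree iff its incidence graph
is a tree, i.e. is connected and has one node more than it has edges. A fold merges the hyperedge
nodes `e` and `e'`, which keeps the graph connected and removes one node. In a hypertree `e` and
`e'` share exactly one vertex (two common vertices would close a 4-cycle), so the number
`∑ f, |f|` of edges also drops by exactly one.
-/

open SimpleGraph

namespace SimpleGraph.Walk

variable {V : Type*} {G : SimpleGraph V}

def ofFun : (m : ℕ) → (f : ℕ → V) → (∀ i < m, G.Adj (f i) (f (i + 1))) → G.Walk (f 0) (f m)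
  | 0, _, _ => .nil
  | m + 1, f, h =>
    .cons (h 0 m.succ_pos) (ofFun m (fun i => f (i + 1)) fun i hi => h (i + 1) (by omega))

@[simp] lemma length_ofFun (m : ℕ) (f : ℕ → V) (h : ∀ i < m, G.Adj (f i) (f (i + 1))) :
    (ofFun m f h).length = m := by
  induction m generalizing f with
  | zero => rfl
  | succ m ih => simp [ofFun, ih]

lemma getVert_ofFun (m : ℕ) (f : ℕ → V) (h : ∀ i < m, G.Adj (f i) (f (i + 1))) {i : ℕ}
    (hi : i ≤ m) : (ofFun m f h).getVert i = f i := by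
  induction m generalizing f i with
  | zero => simp_all [ofFun]
  | succ m ih =>
    cases i with
    | zero => rfl
    | succ i => exact ih _ _ (by omega)

lemma isPath_ofFun {m : ℕ} {f : ℕ → V} (h : ∀ i < m, G.Adj (f i) (f (i + 1)))
    (hf : Set.InjOn f {i | i ≤ m}) : (ofFun m f h).IsPath := by
  rw [← IsPath.getVert_injOn_iff, length_ofFun]
  intro i hi j hj hij
  rw [getVert_ofFun _ _ _ hi, getVert_ofFun _ _ _ hj] at hij
  exact hf hi hj hij

end SimpleGraph.Walk

namespace Hypergraph

variable {α : Type*}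

def incidenceGraph (E : Finset (Finset α)) : SimpleGraph (α ⊕ E) where
  Adj
    | .inl v, .inr f => v ∈ f.1
    | .inr f, .inl v => v ∈ f.1
    | _, _ => False
  symm := ⟨by rintro (_ | _) (_ | _) h <;> exact h⟩
  loopless := ⟨by rintro (_ | _) h <;> exact h⟩

variable {E F : Finset (Finset α)}

@[simp] lemma incidenceGraph_adj_inl_inr {v : α} {f : E} :
    (incidenceGraph E).Adj (.inl v) (.inr f) ↔ v ∈ f.1 := Iff.rfl

@[simp] lemma incidenceGraph_adj_inr_inl {v : α} {f : E} :
    (incidenceGraph E).Adj (.inr f) (.inl v) ↔ v ∈ f.1 := Iff.rfl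

@[simp] lemma not_incidenceGraph_adj_inl_inl {v w : α} :
    ¬ (incidenceGraph E).Adj (.inl v) (.inl w) := id

@[simp] lemma not_incidenceGraph_adj_inr_inr {f g : E} :
    ¬ (incidenceGraph E).Adj (.inr f) (.inr g) := id

lemma incidenceGraph.isLeft_of_adj {a b : α ⊕ E} (h : (incidenceGraph E).Adj a b) :
    b.isLeft = !a.isLeft := by
  rcases a with _ | _ <;> rcases b with _ | _ <;> simp_all

lemma incidenceGraph.isLeft_getVert {a b : α ⊕ E} (p : (incidenceGraph E).Walk a b) (i : ℕ)
    (hi : i ≤ p.length) : (p.getVert i).isLeft = (a.isLeft == decide (Even i)) := by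
  induction p generalizing i with
  | nil => simp_all
  | cons h q ih =>
    cases i with
    | zero => simp
    | succ i =>
      rw [Walk.getVert_cons_succ, ih i (by simp_all), incidenceGraph.isLeft_of_adj h]
      cases Sum.isLeft _ <;> simp [Nat.even_add_one, -Nat.not_even_iff_odd]

theorem card_edgeSet_incidenceGraph :
    Nat.card (incidenceGraph E).edgeSet = ∑ f ∈ E, f.card := by
  let incidence : (Σ f : E, f.1) → (incidenceGraph E).edgeSet :=
    fun ⟨f, v⟩ => ⟨s(.inl v, .inr f), v.2⟩
  have hbij : incidence.Bijective := by
    constructor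
    · rintro ⟨f, v⟩ ⟨g, w⟩ h
      obtain ⟨hvw, rfl⟩ : v.1 = w.1 ∧ f = g := by
        simpa [incidence] using congrArg Subtype.val h
      rw [Subtype.ext hvw]
    · rintro ⟨d, hd⟩
      induction d using Sym2.ind with
      | _ a b =>
      rcases a with v | f <;> rcases b with w | g <;> simp at hd
      · exact ⟨⟨g, ⟨v, hd⟩⟩, rfl⟩
      · exact ⟨⟨f, ⟨w, hd⟩⟩, Subtype.ext Sym2.eq_swap⟩
  rw [← Nat.card_congr (Equiv.ofBijective _ hbij), Nat.card_sigma]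
  simp [Finset.sum_attach]

/-- A cycle through the vertex `u`, entering the hyperedge `f` and then the vertex `u'`, yields two
distinct paths from `u'` to `u`: the rest of the cycle, and `u' f u`. -/
lemma not_isCycle_of_existsUnique_path
    (huniq : ∀ v w : α, ∃! p : (incidenceGraph E).Walk (.inl v) (.inl w), p.IsPath)
    {a : α ⊕ E} (ha : a.isLeft) (c : (incidenceGraph E).Walk a a) : ¬ c.IsCycle := by
  intro hc
  obtain ⟨u, rfl⟩ := Sum.isLeft_iff.1 ha
  rcases c with _ | ⟨h₁, _ | ⟨h₂, q⟩⟩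
  · exact hc.not_nil Walk.Nil.nil
  · exact (incidenceGraph E).loopless.irrefl _ h₁
  obtain ⟨f, rfl⟩ := Sum.isRight_iff.1 (by simpa using incidenceGraph.isLeft_of_adj h₁)
  obtain ⟨u', rfl⟩ := Sum.isLeft_iff.1 (by simpa using incidenceGraph.isLeft_of_adj h₂)
  rw [Walk.cons_isCycle_iff, Walk.cons_isPath_iff] at hc
  obtain ⟨⟨hq, hfq⟩, hedge⟩ := hc
  have hu' : u' ≠ u := by
    rintro rfl
    obtain rfl := (huniq u' u').unique hq .nil
    simp at hedge
  have hr : (Walk.cons h₂.symm (Walk.cons h₁.symm Walk.nil)).IsPath := by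
    simp [hu']
  obtain rfl := (huniq u' u).unique hq hr
  simp at hfq

theorem isTree_incidenceGraph_iff [Nonempty α] (hE : ∀ f ∈ E, f.Nonempty) :
    (incidenceGraph E).IsTree ↔
      ∀ v w : α, ∃! p : (incidenceGraph E).Walk (.inl v) (.inl w), p.IsPath := by
  refine ⟨fun h v w => (isTree_iff_existsUnique_path.1 h).2 _ _, fun huniq => ⟨?_, ?_⟩⟩
  · have hreach (a : α ⊕ E) : ∃ v, (incidenceGraph E).Reachable (.inl v) a := by
      rcases a with v | f
      · exact ⟨v, .rfl⟩
      · obtain ⟨v, hv⟩ := hE f f.2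
        exact ⟨v, (show (incidenceGraph E).Adj (.inl v) (.inr f) from hv).reachable⟩
    refine (connected_iff _).2 ⟨fun a b => ?_, inferInstance⟩
    obtain ⟨v, hv⟩ := hreach a
    obtain ⟨w, hw⟩ := hreach b
    exact hv.symm.trans (((huniq v w).exists.elim fun p _ => p.reachable).trans hw)
  · classical
    intro a c hc
    cases ha : a.isLeft
    · have hsnd : c.snd.isLeft := by
        simpa [ha] using incidenceGraph.isLeft_of_adj (c.adj_snd hc.not_nil)
      exact not_isCycle_of_existsUnique_path huniq hsnd _ (hc.rotate (c.getVert_mem_support 1))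
    · exact not_isCycle_of_existsUnique_path huniq ha c hc

lemma card_inter_le_one_of_isAcyclic [DecidableEq α] (h : (incidenceGraph E).IsAcyclic)
    {f g : Finset α} (hf : f ∈ E) (hg : g ∈ E) (hfg : f ≠ g) : (f ∩ g).card ≤ 1 := by
  by_contra! hcard
  obtain ⟨y, hy, z, hz, hyz⟩ := Finset.one_lt_card.1 hcard
  rw [Finset.mem_inter] at hy hz
  let through (k : E) (hyk : y ∈ k.1) (hzk : z ∈ k.1) :
      (incidenceGraph E).Path (.inl y) (.inl z) :=
    ⟨.cons (show (incidenceGraph E).Adj (.inl y) (.inr k) from hyk)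
      (.cons (show (incidenceGraph E).Adj (.inr k) (.inl z) from hzk) .nil), by simp [hyz]⟩
  have := congrArg (fun p : (incidenceGraph E).Path _ _ => p.1.getVert 1)
    ((h.subsingleton_path _ _).elim (through ⟨f, hf⟩ hy.1 hz.1) (through ⟨g, hg⟩ hy.2 hz.2))
  simp only [through, Walk.getVert_cons_succ, Walk.getVert_zero, Sum.inr.injEq] at this
  exact hfg (Subtype.ext_iff.1 this)

def incidenceGraphHom (φ : E → F) (hφ : ∀ f, f.1 ⊆ (φ f).1) :
    incidenceGraph E →g incidenceGraph F where
  toFun := Sum.map id φ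
  map_rel' {a b} h := by
    rcases a with _ | f <;> rcases b with _ | g <;> simp only [incidenceGraph_adj_inl_inr,
      incidenceGraph_adj_inr_inl, not_incidenceGraph_adj_inl_inl, not_incidenceGraph_adj_inr_inr,
      Sum.map_inl, Sum.map_inr, id] at h ⊢
    exacts [hφ g h, hφ f h]

section Fold

variable [DecidableEq α] {e e' : Finset α}

def foldEdge (E : Finset (Finset α)) (e e' : Finset α) :
    E → (insert (e ∪ e') ((E.erase e).erase e') : Finset (Finset α)) := fun f =>
  if h : f.1 = e ∨ f.1 = e' then ⟨e ∪ e', Finset.mem_insert_self _ _⟩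
  else ⟨f.1, Finset.mem_insert_of_mem <| Finset.mem_erase.2
    ⟨fun h' => h (.inr h'), Finset.mem_erase.2 ⟨fun h' => h (.inl h'), f.2⟩⟩⟩

lemma subset_foldEdge (f : E) : f.1 ⊆ (foldEdge E e e' f).1 := by
  unfold foldEdge
  split_ifs with h
  · rcases h with h | h <;> rw [h]
    exacts [Finset.subset_union_left, Finset.subset_union_right]
  · exact subset_rfl

lemma foldEdge_surjective (he : e ∈ E) : (foldEdge E e e').Surjective := by
  rintro ⟨g, hg⟩
  rcases Finset.mem_insert.1 hg with rfl | hg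
  · exact ⟨⟨e, he⟩, by simp [foldEdge]⟩
  · obtain ⟨hge', hge, hg⟩ : g ≠ e' ∧ g ≠ e ∧ g ∈ E := by simpa using hg
    exact ⟨⟨g, hg⟩, by simp [foldEdge, hge, hge']⟩

lemma union_notMem_erase_erase (h : (incidenceGraph E).IsAcyclic) (he : e ∈ E) (he' : e' ∈ E)
    (hne : e ≠ e') (hint : (e ∩ e').Nonempty) : e ∪ e' ∉ (E.erase e).erase e' := by
  intro hU
  obtain ⟨hUe', hUe, hU⟩ : e ∪ e' ≠ e' ∧ e ∪ e' ≠ e ∧ e ∪ e' ∈ E := by simpa using hU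
  have hcard := card_inter_le_one_of_isAcyclic h hU he hUe
  have hcard' := card_inter_le_one_of_isAcyclic h hU he' hUe'
  rw [Finset.inter_eq_right.2 Finset.subset_union_left, Finset.card_le_one] at hcard
  rw [Finset.inter_eq_right.2 Finset.subset_union_right, Finset.card_le_one] at hcard'
  obtain ⟨x, hx⟩ := hint
  rw [Finset.mem_inter] at hx
  exact hne (Finset.ext fun y => ⟨fun hy => hcard y hy x hx.1 ▸ hx.2,
    fun hy => hcard' y hy x hx.2 ▸ hx.1⟩)

theorem isTree_incidenceGraph_fold [Fintype α] (h : (incidenceGraph E).IsTree) (he : e ∈ E)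
    (he' : e' ∈ E) (hne : e ≠ e') (hint : (e ∩ e').Nonempty) :
    (incidenceGraph (insert (e ∪ e') ((E.erase e).erase e'))).IsTree := by
  have hinter : (e ∩ e').card = 1 :=
    le_antisymm (card_inter_le_one_of_isAcyclic h.isAcyclic he he' hne) hint.card_pos
  have hU := union_notMem_erase_erase h.isAcyclic he he' hne hint
  have he'E : e' ∈ E.erase e := Finset.mem_erase.2 ⟨hne.symm, he'⟩
  have hsum := Finset.sum_erase_add _ Finset.card he'E
  have hsum' := Finset.sum_erase_add _ Finset.card he
  have hcard := Finset.card_erase_add_one he'E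
  have hcard' := Finset.card_erase_add_one he
  have hunion := Finset.card_union_add_card_inter e e'
  rw [isTree_iff_connected_and_card] at h ⊢
  refine ⟨h.1.map (incidenceGraphHom _ subset_foldEdge)
    (Sum.map_surjective.2 ⟨Function.surjective_id, foldEdge_surjective he⟩), ?_⟩
  have hcount := h.2
  simp only [card_edgeSet_incidenceGraph, Nat.card_eq_fintype_card, Fintype.card_sum,
    Fintype.card_coe] at hcount ⊢
  rw [Finset.sum_insert hU, Finset.card_insert_of_notMem hU]
  omega

end Fold

end Hypergraph

open Hypergraph

section SimpleWalks

variable {n : ℕ} {E : Finset (Finset (Fin n))} {v w : Fin n}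

theorem WalkData.ext {s t : WalkData n} (hlen : s.len = t.len)
    (hverts : ∀ i (hi : i ≤ s.len), s.verts ⟨i, by omega⟩ = t.verts ⟨i, by omega⟩)
    (heds : ∀ i (hi : i < s.len), s.eds ⟨i, hi⟩ = t.eds ⟨i, by omega⟩) : s = t := by
  obtain ⟨len, verts, eds⟩ := s
  obtain ⟨_, _, _⟩ := t
  dsimp only at hlen hverts heds
  subst hlen
  congr
  · exact funext fun i => hverts i (by omega)
  · exact funext fun i => heds i i.2

namespace IsSimpleWalk

variable {s : WalkData n}

lemma eds_mem (hs : IsSimpleWalk E v w s) (k : Fin s.len) : s.eds k ∈ E := (hs.2.2.2.2 k).1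

variable (hs : IsSimpleWalk E v w s)

/-- The nodes of the incidence-graph path traced by `s`: its vertices at even positions, its
hyperedges at odd ones. -/
def incidenceNode (i : ℕ) : Fin n ⊕ E :=
  if h : i % 2 = 1 ∧ i / 2 < s.len then .inr ⟨s.eds ⟨i / 2, h.2⟩, hs.eds_mem _⟩
  else .inl (s.verts ⟨min (i / 2) s.len, by omega⟩)

lemma incidenceNode_two_mul {k : ℕ} (hk : k ≤ s.len) :
    hs.incidenceNode (2 * k) = .inl (s.verts ⟨k, by omega⟩) := by
  simp [incidenceNode, Nat.min_eq_left hk]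

lemma incidenceNode_two_mul_add_one {k : ℕ} (hk : k < s.len) :
    hs.incidenceNode (2 * k + 1) = .inr ⟨s.eds ⟨k, hk⟩, hs.eds_mem _⟩ := by
  simp [incidenceNode, hk, Nat.add_mod, Nat.add_div]

lemma incidenceGraph_adj_incidenceNode {i : ℕ} (hi : i < 2 * s.len) :
    (incidenceGraph E).Adj (hs.incidenceNode i) (hs.incidenceNode (i + 1)) := by
  obtain ⟨k, rfl | rfl⟩ := Nat.even_or_odd' i
  · rw [hs.incidenceNode_two_mul (by omega), hs.incidenceNode_two_mul_add_one (by omega)]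
    exact (hs.2.2.2.2 ⟨k, by omega⟩).2.1
  · rw [hs.incidenceNode_two_mul_add_one (by omega), show 2 * k + 1 + 1 = 2 * (k + 1) by ring,
      hs.incidenceNode_two_mul (by omega)]
    exact (hs.2.2.2.2 ⟨k, by omega⟩).2.2

lemma injOn_incidenceNode : Set.InjOn hs.incidenceNode {i | i ≤ 2 * s.len} := by
  intro i hi j hj hij
  simp only [Set.mem_ofPred_eq] at hi hj
  obtain ⟨k, rfl | rfl⟩ := Nat.even_or_odd' i <;> obtain ⟨l, rfl | rfl⟩ := Nat.even_or_odd' j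
  · rw [hs.incidenceNode_two_mul (by omega), hs.incidenceNode_two_mul (by omega)] at hij
    have := hs.2.2.1 (Sum.inl_injective hij)
    simp_all
  · rw [hs.incidenceNode_two_mul (by omega), hs.incidenceNode_two_mul_add_one (by omega)] at hij
    simp at hij
  · rw [hs.incidenceNode_two_mul_add_one (by omega), hs.incidenceNode_two_mul (by omega)] at hij
    simp at hij
  · rw [hs.incidenceNode_two_mul_add_one (by omega),
      hs.incidenceNode_two_mul_add_one (by omega)] at hij
    have := hs.2.2.2.1 (Subtype.ext_iff.1 (Sum.inr_injective hij))
    simp_all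

def toWalk : (incidenceGraph E).Walk (.inl v) (.inl w) :=
  (Walk.ofFun (2 * s.len) hs.incidenceNode fun _ => hs.incidenceGraph_adj_incidenceNode).copy
    (by rw [← Nat.mul_zero 2, hs.incidenceNode_two_mul (Nat.zero_le _)]; exact congrArg _ hs.1)
    (by rw [hs.incidenceNode_two_mul le_rfl]; exact congrArg _ hs.2.1)

lemma isPath_toWalk : hs.toWalk.IsPath := by
  simpa [toWalk] using Walk.isPath_ofFun _ hs.injOn_incidenceNode

lemma length_toWalk : hs.toWalk.length = 2 * s.len := by
  simp [toWalk]

lemma getVert_toWalk {i : ℕ} (hi : i ≤ 2 * s.len) :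
    hs.toWalk.getVert i = hs.incidenceNode i := by
  simp [toWalk, Walk.getVert_ofFun _ _ _ hi]

end IsSimpleWalk

namespace WalkData

section

variable (p : (incidenceGraph E).Walk (.inl v) (.inl w))

/-- The default values of `Sum.elim` are never used: by parity, the even positions of `p` are
vertices and the odd ones hyperedges. -/
def ofIncidenceWalk : WalkData n where
  len := p.length / 2
  verts k := (p.getVert (2 * k)).elim id fun _ => v
  eds k := (p.getVert (2 * k + 1)).elim (fun _ => ∅) Subtype.val

lemma even_length_of_incidenceWalk : Even p.length := by
  simpa using incidenceGraph.isLeft_getVert p p.length le_rfl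

lemma getVert_two_mul_eq_inl (k : Fin ((ofIncidenceWalk p).len + 1)) :
    p.getVert (2 * k) = .inl ((ofIncidenceWalk p).verts k) := by
  have hleft := incidenceGraph.isLeft_getVert p (2 * k)
    (by have := k.2; simp only [ofIncidenceWalk] at this; omega)
  simp only [ofIncidenceWalk]
  generalize p.getVert (2 * k) = x at hleft ⊢
  rcases x with _ | _ <;> simp_all

lemma exists_getVert_two_mul_add_one_eq_inr (k : Fin (ofIncidenceWalk p).len) :
    ∃ f : E, p.getVert (2 * k + 1) = .inr f ∧ (ofIncidenceWalk p).eds k = f.1 := by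
  have hleft := incidenceGraph.isLeft_getVert p (2 * k + 1)
    (by have := k.2; simp only [ofIncidenceWalk] at this; omega)
  simp only [ofIncidenceWalk]
  generalize p.getVert (2 * k + 1) = x at hleft ⊢
  rcases x with _ | f
  · simp at hleft
  · exact ⟨f, rfl, rfl⟩

end

variable {p : (incidenceGraph E).Walk (.inl v) (.inl w)}

lemma two_mul_len_ofIncidenceWalk : 2 * (ofIncidenceWalk p).len = p.length :=
  Nat.two_mul_div_two_of_even (even_length_of_incidenceWalk p)

theorem isSimpleWalk_ofIncidenceWalk (hp : p.IsPath) :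
    IsSimpleWalk E v w (ofIncidenceWalk p) := by
  have hlen := two_mul_len_ofIncidenceWalk (p := p)
  have hverts := getVert_two_mul_eq_inl p
  refine ⟨?_, ?_, ?_, ?_, fun k => ?_⟩
  · simpa using (hverts 0).symm
  · simpa [hlen] using (hverts (Fin.last _)).symm
  · intro i j hij
    have := hp.getVert_injOn (show 2 * i.1 ≤ p.length by omega)
      (show 2 * j.1 ≤ p.length by omega) (by rw [hverts i, hverts j, hij])
    omega
  · intro i j hij
    obtain ⟨f, hf, hfi⟩ := exists_getVert_two_mul_add_one_eq_inr p i
    obtain ⟨g, hg, hgj⟩ := exists_getVert_two_mul_add_one_eq_inr p j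
    have := hp.getVert_injOn (show 2 * i.1 + 1 ≤ p.length by omega)
      (show 2 * j.1 + 1 ≤ p.length by omega)
      (by rw [hf, hg, Subtype.ext (hfi.symm.trans (hij.trans hgj))])
    omega
  · obtain ⟨f, hf, hfk⟩ := exists_getVert_two_mul_add_one_eq_inr p k
    have hstep₁ := p.adj_getVert_succ (i := 2 * k.castSucc) (by simp; omega)
    have hstep₂ := p.adj_getVert_succ (i := 2 * k + 1) (by omega)
    rw [hverts, Fin.val_castSucc, hf] at hstep₁
    rw [hf, show 2 * k.1 + 1 + 1 = 2 * k.succ by simp; ring, hverts] at hstep₂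
    rw [hfk]
    exact ⟨f.2, hstep₁, hstep₂⟩

lemma ofIncidenceWalk_toWalk {s : WalkData n} (hs : IsSimpleWalk E v w s) :
    ofIncidenceWalk hs.toWalk = s := by
  have hlen : (ofIncidenceWalk hs.toWalk).len = s.len := by
    simp [ofIncidenceWalk, hs.length_toWalk]
  refine WalkData.ext hlen (fun i hi => ?_) (fun i hi => ?_)
  · simp [ofIncidenceWalk, hs.getVert_toWalk (show 2 * i ≤ 2 * s.len by omega),
      hs.incidenceNode_two_mul (show i ≤ s.len by omega)]
  · simp [ofIncidenceWalk, hs.getVert_toWalk (show 2 * i + 1 ≤ 2 * s.len by omega),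
      hs.incidenceNode_two_mul_add_one (show i < s.len by omega)]

lemma toWalk_ofIncidenceWalk (hp : p.IsPath) : (isSimpleWalk_ofIncidenceWalk hp).toWalk = p := by
  have hlen := two_mul_len_ofIncidenceWalk (p := p)
  refine Walk.ext_getVert_le_length (by rw [IsSimpleWalk.length_toWalk, hlen]) fun i hi => ?_
  rw [IsSimpleWalk.length_toWalk] at hi
  rw [IsSimpleWalk.getVert_toWalk _ hi]
  obtain ⟨k, rfl | rfl⟩ := Nat.even_or_odd' i
  · rw [IsSimpleWalk.incidenceNode_two_mul _ (by omega)]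
    exact (getVert_two_mul_eq_inl p ⟨k, by omega⟩).symm
  · rw [IsSimpleWalk.incidenceNode_two_mul_add_one _ (by omega)]
    obtain ⟨f, hf, hfk⟩ := exists_getVert_two_mul_add_one_eq_inr p ⟨k, by omega⟩
    rw [hf]
    exact congrArg Sum.inr (Subtype.ext hfk)

end WalkData

def simpleWalkEquivPath (v w : Fin n) :
    {s // IsSimpleWalk E v w s} ≃ (incidenceGraph E).Path (.inl v) (.inl w) where
  toFun s := ⟨s.2.toWalk, s.2.isPath_toWalk⟩
  invFun p := ⟨_, WalkData.isSimpleWalk_ofIncidenceWalk p.2⟩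
  left_inv s := Subtype.ext (WalkData.ofIncidenceWalk_toWalk s.2)
  right_inv p := Subtype.ext (WalkData.toWalk_ofIncidenceWalk p.2)

theorem existsUnique_isSimpleWalk_iff (v w : Fin n) :
    (∃! s, IsSimpleWalk E v w s) ↔
      ∃! p : (incidenceGraph E).Walk (.inl v) (.inl w), p.IsPath := by
  rw [← unique_subtype_iff_existsUnique, ← unique_subtype_iff_existsUnique]
  exact ⟨fun ⟨_⟩ => ⟨(simpleWalkEquivPath v w).symm.unique⟩,
    fun ⟨_⟩ => ⟨(simpleWalkEquivPath v w).unique⟩⟩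

theorem isHypertree_iff_isTree [Nonempty (Fin n)] :
    IsHypertree E ↔ IsHypergraph E ∧ (incidenceGraph E).IsTree := by
  refine and_congr_right fun hE => ?_
  rw [isTree_incidenceGraph_iff fun f hf => Finset.card_pos.1 (by have := hE f hf; omega)]
  simp_rw [existsUnique_isSimpleWalk_iff]

theorem IsHypergraph.fold (hE : IsHypergraph E) {e e' : Finset (Fin n)} (he : e ∈ E) :
    IsHypergraph (insert (e ∪ e') ((E.erase e).erase e')) := by
  intro f hf
  rcases Finset.mem_insert.1 hf with rfl | hf
  · exact (hE e he).trans (Finset.card_le_card Finset.subset_union_left)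
  · exact hE f (Finset.mem_of_mem_erase (Finset.mem_of_mem_erase hf))

end SimpleWalks

/-- A single fold of a hypertree (replacing two intersecting hyperedges `e, e'` by
their union) yields a hypertree. -/
theorem stmt8 (n : ℕ) (Θ : Finset (Finset (Fin n))) (hΘ : IsHypertree Θ)
    (e e' : Finset (Fin n)) (he : e ∈ Θ) (he' : e' ∈ Θ) (hne : e ≠ e')
    (hint : (e ∩ e').Nonempty) :
    IsHypertree (insert (e ∪ e') ((Θ.erase e).erase e')) := by
  have : Nonempty (Fin n) := ⟨hint.choose⟩
  rw [isHypertree_iff_isTree] at hΘ ⊢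
  exact ⟨hΘ.1.fold he, isTree_incidenceGraph_fold hΘ.2 he he' hne hint⟩
end

section
/- Every hypertree on [n] has at most n − 1 hyperedges, and a hypertree with exactly n − 1 hyperedges is a tree (each hyperedge has exactly 2 vertices). -/
theorem Finset.card_le_and_eq_one_of_sum_le {ι : Type*} {s : Finset ι} {f : ι → ℕ} {m : ℕ}
    (hf : ∀ i ∈ s, 1 ≤ f i) (hsum : ∑ i ∈ s, f i ≤ m) :
    s.card ≤ m ∧ (s.card = m → ∀ i ∈ s, f i = 1) := by
  have hcard : s.card ≤ ∑ i ∈ s, f i := by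
    simpa using Finset.sum_le_sum hf
  refine ⟨hcard.trans hsum, fun hm i hi => ?_⟩
  have hones : ∑ _i ∈ s, 1 = ∑ i ∈ s, f i := by rw [← card_eq_sum_ones]; omega
  exact ((Finset.sum_eq_sum_iff_of_le hf).mp hones i hi).symm

namespace WalkData

variable {n : ℕ}

def nil (v : Fin n) : WalkData n := ⟨0, fun _ => v, Fin.elim0⟩

def single (v w : Fin n) (e : Finset (Fin n)) : WalkData n := ⟨1, ![v, w], ![e]⟩

def cons (u : Fin n) (e : Finset (Fin n)) (s : WalkData n) : WalkData n :=
  ⟨s.len + 1, Fin.cons u s.verts, Fin.cons e s.eds⟩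

def take (s : WalkData n) (k : ℕ) (hk : k ≤ s.len) : WalkData n :=
  ⟨k, fun i => s.verts (Fin.castLE (Nat.succ_le_succ hk) i), fun i => s.eds (Fin.castLE hk i)⟩

def firstEdge : WalkData n → Option (Finset (Fin n))
  | ⟨0, _, _⟩ => none
  | ⟨_ + 1, _, eds⟩ => some (eds 0)

@[simp] theorem firstEdge_nil (v : Fin n) : (nil v).firstEdge = none := rfl

@[simp] theorem firstEdge_single (v w : Fin n) (e : Finset (Fin n)) :
    (single v w e).firstEdge = some e := rfl

@[simp] theorem firstEdge_cons (u : Fin n) (e : Finset (Fin n)) (s : WalkData n) :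
    (cons u e s).firstEdge = some e := rfl

theorem firstEdge_take (s : WalkData n) {k : ℕ} (hk : k ≤ s.len) (hk0 : 0 < k) :
    (s.take k hk).firstEdge = s.firstEdge := by
  obtain ⟨_ | len, verts, eds⟩ := s
  · exact absurd hk (by dsimp only; omega)
  · obtain _ | k := k
    · omega
    · rfl

end WalkData

open WalkData

section SimpleWalks

variable {n : ℕ} {E : Finset (Finset (Fin n))}

theorem isSimpleWalk_nil (v : Fin n) : IsSimpleWalk E v v (nil v) :=
  ⟨rfl, rfl, fun a b _ => Subsingleton.elim (α := Fin 1) a b, fun a => a.elim0,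
    fun k => k.elim0⟩

theorem isSimpleWalk_single {v w : Fin n} {e : Finset (Fin n)} (he : e ∈ E)
    (hv : v ∈ e) (hw : w ∈ e) (hvw : v ≠ w) : IsSimpleWalk E v w (single v w e) := by
  refine ⟨rfl, rfl, ?_, fun a b _ => Subsingleton.elim (α := Fin 1) a b, fun k => ?_⟩
  · intro a b hab
    fin_cases a <;> fin_cases b <;> simp_all [single]
  · fin_cases k
    exact ⟨he, hv, hw⟩

theorem IsSimpleWalk.take {v w : Fin n} {s : WalkData n} (hs : IsSimpleWalk E v w s)
    {k : ℕ} (hk : k ≤ s.len) :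
    IsSimpleWalk E v (s.verts ⟨k, Nat.lt_succ_of_le hk⟩) (s.take k hk) := by
  obtain ⟨h0, -, hverts, heds, hstep⟩ := hs
  refine ⟨h0, rfl, fun a b hab => Fin.castLE_injective _ (hverts hab),
    fun a b hab => Fin.castLE_injective _ (heds hab), fun i => hstep (Fin.castLE hk i)⟩

theorem IsSimpleWalk.cons {u v w : Fin n} {e : Finset (Fin n)} {s : WalkData n}
    (hs : IsSimpleWalk E v w s) (he : e ∈ E) (hu : u ∈ e) (hv : v ∈ e)
    (hus : u ∉ Set.range s.verts) (hes : e ∉ Set.range s.eds) :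
    IsSimpleWalk E u w (s.cons u e) := by
  obtain ⟨h0, hlast, hverts, heds, hstep⟩ := hs
  refine ⟨rfl, hlast, Fin.cons_injective_of_injective hus hverts,
    Fin.cons_injective_of_injective hes heds, Fin.cases ⟨he, hu, h0 ▸ hv⟩ fun j => ?_⟩
  simpa only [WalkData.cons, Fin.cons_succ, ← Fin.succ_castSucc] using hstep j

end SimpleWalks

namespace IsHypertree

variable {n : ℕ} {E : Finset (Finset (Fin n))}

noncomputable def walk (hE : IsHypertree E) (v w : Fin n) : WalkData n :=
  (hE.2 v w).exists.choose

theorem isSimpleWalk_walk (hE : IsHypertree E) (v w : Fin n) :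
    IsSimpleWalk E v w (hE.walk v w) :=
  (hE.2 v w).exists.choose_spec

theorem eq_walk (hE : IsHypertree E) {v w : Fin n} {s : WalkData n}
    (hs : IsSimpleWalk E v w s) : s = hE.walk v w :=
  (hE.2 v w).unique hs (hE.isSimpleWalk_walk v w)

theorem firstEdge_walk_self (hE : IsHypertree E) (r : Fin n) :
    (hE.walk r r).firstEdge = none := by
  rw [← hE.eq_walk (isSimpleWalk_nil r), firstEdge_nil]

/-- A simple walk from `v ∈ e` that later meets `e` again must start with `e`: otherwise its
initial segment up to that vertex and the one-edge walk through `e` are two distinct walks. -/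
theorem firstEdge_eq_of_verts_mem (hE : IsHypertree E) {v w : Fin n} {s : WalkData n}
    (hs : IsSimpleWalk E v w s) {e : Finset (Fin n)} (he : e ∈ E) (hv : v ∈ e)
    {k : ℕ} (hk : k ≤ s.len) (hke : s.verts ⟨k, Nat.lt_succ_of_le hk⟩ ∈ e)
    (hkv : s.verts ⟨k, Nat.lt_succ_of_le hk⟩ ≠ v) : s.firstEdge = some e := by
  have hk0 : 0 < k := by
    refine Nat.pos_of_ne_zero fun h => hkv ?_
    subst h
    exact hs.1
  have htake := hs.take hk
  rw [← firstEdge_take s hk hk0, hE.eq_walk htake,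
    ← hE.eq_walk (isSimpleWalk_single he hv hke hkv.symm), firstEdge_single]

theorem firstEdge_walk_eq_or (hE : IsHypertree E) (r : Fin n) {e : Finset (Fin n)} (he : e ∈ E)
    {u v : Fin n} (hu : u ∈ e) (hv : v ∈ e) (huv : u ≠ v) :
    (hE.walk u r).firstEdge = some e ∨ (hE.walk v r).firstEdge = some e := by
  have hs := hE.isSimpleWalk_walk v r
  by_cases hus : u ∈ Set.range (hE.walk v r).verts
  · obtain ⟨k, rfl⟩ := hus
    exact Or.inr (hE.firstEdge_eq_of_verts_mem hs he hv (Nat.lt_succ_iff.mp k.isLt) hu huv)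
  by_cases hes : e ∈ Set.range (hE.walk v r).eds
  · obtain ⟨j, rfl⟩ := hes
    have hne : (hE.walk v r).verts j.succ ≠ v := fun h =>
      Fin.succ_ne_zero j (hs.2.2.1 (h.trans hs.1.symm))
    exact Or.inr (hE.firstEdge_eq_of_verts_mem hs he hv j.isLt (hs.2.2.2.2 j).2.2 hne)
  · rw [← hE.eq_walk (hs.cons he hu hv hus hes), firstEdge_cons]
    exact Or.inl rfl

noncomputable def fibre (hE : IsHypertree E) (r : Fin n) (e : Finset (Fin n)) : Finset (Fin n) :=
  open Classical in e.filter fun v => (hE.walk v r).firstEdge = some e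

theorem card_sub_one_le_card_fibre (hE : IsHypertree E) (r : Fin n) {e : Finset (Fin n)}
    (he : e ∈ E) : e.card - 1 ≤ (hE.fibre r e).card := by
  classical
  have hrest : (e \ hE.fibre r e).card ≤ 1 := by
    refine Finset.card_le_one.mpr fun u hu v hv => by_contra fun huv => ?_
    simp only [fibre, Finset.mem_sdiff, Finset.mem_filter, not_and] at hu hv
    rcases hE.firstEdge_walk_eq_or r he hu.1 hv.1 huv with h | h
    exacts [hu.2 hu.1 h, hv.2 hv.1 h]
  have hsub : hE.fibre r e ⊆ e := Finset.filter_subset _ e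
  have := Finset.card_sdiff_add_card_eq_card hsub
  omega

theorem fibre_subset_erase (hE : IsHypertree E) (r : Fin n) (e : Finset (Fin n)) :
    hE.fibre r e ⊆ Finset.univ.erase r := by
  intro v hv
  simp only [fibre, Finset.mem_filter] at hv
  refine Finset.mem_erase.mpr ⟨?_, Finset.mem_univ v⟩
  rintro rfl
  simp [firstEdge_walk_self] at hv

theorem pairwiseDisjoint_fibre (hE : IsHypertree E) (r : Fin n) :
    (E : Set (Finset (Fin n))).PairwiseDisjoint (hE.fibre r) := by
  intro e₁ _ e₂ _ hne
  refine Finset.disjoint_left.mpr fun v h₁ h₂ => hne ?_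
  simp only [fibre, Finset.mem_filter] at h₁ h₂
  exact Option.some_injective _ (h₁.2.symm.trans h₂.2)

theorem sum_card_sub_one_le (hE : IsHypertree E) (r : Fin n) :
    ∑ e ∈ E, (e.card - 1) ≤ n - 1 := by
  calc ∑ e ∈ E, (e.card - 1) ≤ ∑ e ∈ E, (hE.fibre r e).card :=
        Finset.sum_le_sum fun e he => hE.card_sub_one_le_card_fibre r he
    _ = (E.biUnion (hE.fibre r)).card := (Finset.card_biUnion (hE.pairwiseDisjoint_fibre r)).symm
    _ ≤ (Finset.univ.erase r).card :=
        Finset.card_le_card (Finset.biUnion_subset.mpr fun e _ => hE.fibre_subset_erase r e)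
    _ = n - 1 := by simp

end IsHypertree

/-- A hypertree on `[n]` has at most `n - 1` hyperedges, and a hypertree with
exactly `n - 1` hyperedges is a tree: each hyperedge has exactly two vertices. -/
theorem stmt10 (n : ℕ) (hn : 1 ≤ n) (E : Finset (Finset (Fin n)))
    (hE : IsHypertree E) :
    E.card ≤ n - 1 ∧ (E.card = n - 1 → ∀ e ∈ E, e.card = 2) := by
  have hpos : ∀ e ∈ E, 1 ≤ e.card - 1 := fun e he => by have := hE.1 e he; omega
  obtain ⟨hle, heq⟩ :=
    Finset.card_le_and_eq_one_of_sum_le hpos (hE.sum_card_sub_one_le ⟨0, hn⟩)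
  refine ⟨hle, fun hcard e he => ?_⟩
  have := heq hcard e he
  have := hE.1 e he
  omega
end

section
/- If partial conjugations x_{i_1,D_1}, ..., x_{i_p,D_p} in Out^0(W_n) pairwise commute, then there exists a hypertree Θ on [n] carrying all of them. -/
/-- The hypergraph `E` carries the partial conjugation `x_{i,D}`: every simple walk
from a vertex of `D` to a vertex of `[n] ∖ (D ∪ {i})` visits `i`. -/
def Carries {n : ℕ} (E : Finset (Finset (Fin n))) (i : Fin n)
    (D : Finset (Fin n)) : Prop :=
  ∀ d ∈ D, ∀ j : Fin n, j ∉ D → j ≠ i →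
    ∀ s : WalkData n, IsSimpleWalk E d j s → ∃ k, s.verts k = i

/-!
Say that `(i, D)` separates `u` from `v` when neither is `i` and exactly one of them lies in
`D`. If `x_{a,A}` and `x_{b,B}` commute in `Out⁰(Wₙ)`, no `z` is separated from `b` by `(a, A)`
and from `a` by `(b, B)`: otherwise the map `Wₙ → S₃` sending `a, b, z` to the three
transpositions and every other generator to `1` shows that their commutator is not inner.
This compatibility implies that when `(i_l, D_l)` separates `u` from `v`, every constraint
separating `u` from `i_l`, or `i_l` from `v`, also separates `u` from `v`, while `l` itself does
not. By induction on the number of separating constraints, the graph joining the pairs that no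
constraint separates is therefore connected. A spanning tree of it, read as a hypertree whose
hyperedges are its edges, carries every `x_{i_k,D_k}`: a walk avoiding `i_k` never crosses from
`D_k` to its complement.
-/

open SimpleGraph Function Finset

section Constraints

variable {α : Type*}

def Separates (a : α) (A : Finset α) (u v : α) : Prop :=
  a ≠ u ∧ a ≠ v ∧ ¬(u ∈ A ↔ v ∈ A)

lemma Separates.symm {a u v : α} {A : Finset α} (h : Separates a A u v) :
    Separates a A v u :=
  ⟨h.2.1, h.1, fun h' => h.2.2 h'.symm⟩

/-- The combinatorial shadow of `x_{a,A}` and `x_{b,B}` commuting in `Out⁰(Wₙ)`. -/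
def Compatible (a : α) (A : Finset α) (b : α) (B : Finset α) : Prop :=
  ∀ z, ¬(Separates a A z b ∧ Separates b B z a)

lemma Separates.of_compatible {a b u v : α} {A B : Finset α} (hc : Compatible a A b B)
    (hauv : Separates a A u v) (hbav : Separates b B a v) : Separates b B u v := by
  have hvb : v ∈ A ↔ b ∈ A := by
    by_contra h
    exact hc v ⟨⟨hauv.2.1, hbav.1.symm, h⟩, hbav.symm⟩
  have hbu : b ≠ u := by
    rintro rfl
    exact hauv.2.2 hvb.symm
  refine ⟨hbu, hbav.2.1, fun huv => ?_⟩
  have hub : u ∈ A ↔ b ∈ A := by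
    by_contra h
    exact hc u ⟨⟨hauv.1, hbav.1.symm, h⟩, hbu, hbav.1, fun h' => hbav.2.2 (h'.symm.trans huv)⟩
  exact hauv.2.2 (hub.trans hvb.symm)

lemma mem_iff_of_forall_not_separates {a : α} {A : Finset α} {m : ℕ} {f : Fin (m + 1) → α}
    (hsep : ∀ k : Fin m, ¬Separates a A (f k.castSucc) (f k.succ)) (ha : ∀ k, f k ≠ a) :
    ∀ k, f 0 ∈ A ↔ f k ∈ A := by
  intro k
  induction k using Fin.induction with
  | zero => rfl
  | succ k ih =>
    exact ih.trans (not_not.1 fun h => hsep k ⟨(ha _).symm, (ha _).symm, h⟩)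

variable {ι : Type*} (a : ι → α) (A : ι → Finset α)

def allowedGraph : SimpleGraph α where
  Adj u v := u ≠ v ∧ ∀ k, ¬Separates (a k) (A k) u v
  symm := ⟨fun _ _ h => ⟨h.1.symm, fun k hk => h.2 k hk.symm⟩⟩
  loopless := ⟨fun _ h => h.1 rfl⟩

variable [Fintype ι]

open Classical in
noncomputable def separators (u v : α) : Finset ι :=
  {k | Separates (a k) (A k) u v}

variable {a A}

lemma mem_separators {u v : α} {k : ι} :
    k ∈ separators a A u v ↔ Separates (a k) (A k) u v := by
  simp [separators]

lemma separators_ssubset_left (hc : ∀ k l, Compatible (a k) (A k) (a l) (A l)) {u v : α} {l : ι}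
    (hl : l ∈ separators a A u v) : separators a A u (a l) ⊂ separators a A u v := by
  classical
  refine Finset.ssubset_of_subset_of_ssubset (fun k hk => ?_) (erase_ssubset hl)
  rw [mem_separators] at hk hl
  rw [mem_erase, mem_separators]
  exact ⟨by rintro rfl; exact hk.2.1 rfl, (hl.symm.of_compatible (hc l k) hk.symm).symm⟩

lemma separators_ssubset_right (hc : ∀ k l, Compatible (a k) (A k) (a l) (A l)) {u v : α} {l : ι}
    (hl : l ∈ separators a A u v) : separators a A (a l) v ⊂ separators a A u v := by
  classical
  refine Finset.ssubset_of_subset_of_ssubset (fun k hk => ?_) (erase_ssubset hl)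
  rw [mem_separators] at hk hl
  rw [mem_erase, mem_separators]
  exact ⟨by rintro rfl; exact hk.1 rfl, hl.of_compatible (hc l k) hk⟩

theorem allowedGraph_preconnected (hc : ∀ k l, Compatible (a k) (A k) (a l) (A l)) :
    (allowedGraph a A).Preconnected := by
  intro u v
  induction hN : #(separators a A u v) using Nat.strong_induction_on generalizing u v with
  | _ N ih =>
    obtain hempty | ⟨l, hl⟩ := (separators a A u v).eq_empty_or_nonempty
    · by_cases huv : u = v
      · exact huv ▸ Reachable.refl u
      · exact Adj.reachable ⟨huv, fun k hk => by simpa [hempty] using mem_separators.2 hk⟩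
    · exact (ih _ (hN ▸ card_lt_card (separators_ssubset_left hc hl)) _ _ rfl).trans
        (ih _ (hN ▸ card_lt_card (separators_ssubset_right hc hl)) _ _ rfl)

end Constraints

section GroupTheory

variable {n : ℕ} {G : Type*} [Group G]

def W.lift (g : Fin n → G) (hg : ∀ j, g j * g j = 1) : W n →* G :=
  PresentedGroup.toGroup (f := g) (by rintro r ⟨j, rfl⟩; simp [hg])

@[simp]
lemma W.lift_gen (g : Fin n → G) (hg : ∀ j, g j * g j = 1) (j : Fin n) :
    W.lift g hg (gen j) = g j :=
  PresentedGroup.toGroup.of _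

def twist {α : Type*} [DecidableEq α] (a : α) (A : Finset α) (g : α → G) : α → G :=
  fun j => if j ∈ A then g a * g j * g a else g j

lemma twist_comp {α β : Type*} [DecidableEq α] [DecidableEq β] (e : β → α) {A : Finset α}
    {A' : Finset β} (hA : ∀ m, e m ∈ A ↔ m ∈ A') (c : β) (g : α → G) :
    twist (e c) A g ∘ e = twist c A' (g ∘ e) := by
  funext m
  simp [twist, hA]

lemma twist_twist_comp {α β : Type*} [DecidableEq α] [DecidableEq β] (e : β → α)
    {A B : Finset α} {A' B' : Finset β} (hA : ∀ m, e m ∈ A ↔ m ∈ A')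
    (hB : ∀ m, e m ∈ B ↔ m ∈ B') (c d : β) (g : α → G) :
    twist (e d) B (twist (e c) A g) ∘ e = twist d B' (twist c A' (g ∘ e)) := by
  rw [twist_comp e hB, twist_comp e hA]

lemma IsPC.map_gen {φ : W n ≃* W n} {a : Fin n} {A : Finset (Fin n)} (hφ : IsPC φ a A)
    (ρ : W n →* G) (j : Fin n) : ρ (φ (gen j)) = twist a A (ρ ∘ gen) j := by
  by_cases hj : j ∈ A
  · simp [twist, hj, hφ.1 j hj]
  · simp [twist, hj, hφ.2 j hj]

lemma IsPC.map_gen_comp {φ ψ : W n ≃* W n} {a b : Fin n} {A B : Finset (Fin n)}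
    (hφ : IsPC φ a A) (hψ : IsPC ψ b B) (ρ : W n →* G) (j : Fin n) :
    ρ (φ (ψ (gen j))) = twist b B (twist a A (ρ ∘ gen)) j := by
  by_cases hj : j ∈ B
  · simp only [hψ.1 j hj, map_mul, hφ.map_gen, twist, if_pos hj]
  · simp only [hψ.2 j hj, hφ.map_gen, twist, if_neg hj]

def transpositions : Fin 3 → Equiv.Perm (Fin 3) :=
  ![Equiv.swap 0 1, Equiv.swap 1 2, Equiv.swap 0 2]

lemma transpositions_mul_self : ∀ m, transpositions m * transpositions m = 1 := by
  decide

/-- The obstruction to compatibility, seen in `S₃`: the letters `0, 1, 2` stand for `a, b, z`,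
and the hypotheses say that `z` is separated from `b` by `(a, A)` and from `a` by `(b, B)`. -/
lemma twist_transpositions_not_conj : ∀ A B : Finset (Fin 3), 0 ∉ A → 1 ∉ B →
    ¬(2 ∈ A ↔ 1 ∈ A) → ¬(2 ∈ B ↔ 0 ∈ B) → ∀ u : Equiv.Perm (Fin 3),
      ∃ m, twist 1 B (twist 0 A transpositions) m ≠
        u * twist 0 A (twist 1 B transpositions) m * u⁻¹ := by
  decide

theorem compatible_of_isPC {φ ψ : W n ≃* W n} {a b : Fin n} {A B : Finset (Fin n)}
    (hφ : IsPC φ a A) (hψ : IsPC ψ b B) (ha : a ∉ A) (hb : b ∉ B) {w : W n}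
    (hw : ∀ x, φ (ψ x) = w * ψ (φ x) * w⁻¹) : Compatible a A b B := by
  classical
  rintro z ⟨hzA, hzB⟩
  set e : Fin 3 → Fin n := ![a, b, z]
  have he : Injective e := by
    intro x y hxy
    fin_cases x <;> fin_cases y <;>
      simp_all [e, hzA.1, hzA.1.symm, hzA.2.1, hzA.2.1.symm, hzB.1, hzB.1.symm]
  let ρ := W.lift (extend e transpositions 1) fun j => by
    rw [extend_def]; split_ifs <;> simp [transpositions_mul_self]
  have hρ : ρ ∘ gen ∘ e = transpositions := funext fun m => by simp [ρ, he.extend_apply]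
  set A' : Finset (Fin 3) := {m | e m ∈ A}
  set B' : Finset (Fin 3) := {m | e m ∈ B}
  have hA' : ∀ m, e m ∈ A ↔ m ∈ A' := by simp [A']
  have hB' : ∀ m, e m ∈ B ↔ m ∈ B' := by simp [B']
  have hconj : ∀ m, twist 1 B' (twist 0 A' transpositions) m =
      ρ w * twist 0 A' (twist 1 B' transpositions) m * (ρ w)⁻¹ := by
    intro m
    have := congrArg ρ (hw (gen (e m)))
    rw [map_mul, map_mul, map_inv, hφ.map_gen_comp hψ, hψ.map_gen_comp hφ] at this
    rw [← hρ, ← comp_assoc, ← twist_twist_comp e hA' hB', ← twist_twist_comp e hB' hA']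
    exact this
  obtain ⟨m, hm⟩ := twist_transpositions_not_conj A' B' (by simp [A', e, ha])
    (by simp [B', e, hb]) (by simpa [A', e] using hzA.2.2) (by simpa [B', e] using hzB.2.2) (ρ w)
  exact hm (hconj m)

end GroupTheory

section Hypertree

lemma SimpleGraph.IsAcyclic.eq_of_isChain_of_nodup {V : Type*} {G : SimpleGraph V}
    (hG : G.IsAcyclic) {l l' : List V} (hne : l ≠ []) (hne' : l' ≠ [])
    (hc : l.IsChain G.Adj) (hc' : l'.IsChain G.Adj) (hn : l.Nodup) (hn' : l'.Nodup)
    (hhead : l.head hne = l'.head hne') (hlast : l.getLast hne = l'.getLast hne') : l = l' := by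
  have := (hG.subsingleton_path _ _).elim
    ⟨(Walk.ofSupport l hne hc).copy hhead hlast, Walk.IsPath.mk' (by simpa using hn)⟩
    ⟨Walk.ofSupport l' hne' hc', Walk.IsPath.mk' (by simpa using hn')⟩
  simpa using congrArg (fun p => p.1.support) this

lemma Function.Injective.pair_castSucc_succ {α : Type*} [DecidableEq α] {m : ℕ}
    {f : Fin (m + 1) → α} (hf : Injective f) :
    Injective fun k : Fin m => ({f k.castSucc, f k.succ} : Finset α) := by
  intro k l h
  dsimp only at h
  have h₁ : f k.castSucc ∈ ({f l.castSucc, f l.succ} : Finset α) := by rw [← h]; simp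
  have h₂ : f k.succ ∈ ({f l.castSucc, f l.succ} : Finset α) := by rw [← h]; simp
  simp only [Finset.mem_insert, Finset.mem_singleton, hf.eq_iff, Fin.ext_iff,
    Fin.val_castSucc, Fin.val_succ] at h₁ h₂
  ext
  omega

variable {n : ℕ} {T : SimpleGraph (Fin n)} {v w : Fin n}

def WalkData.ofVerts {len : ℕ} (f : Fin (len + 1) → Fin n) : WalkData n :=
  ⟨len, f, fun k => {f k.castSucc, f k.succ}⟩

lemma WalkData.eq_of_ofFn_verts_eq {s t : WalkData n}
    (hs : ∀ k, s.eds k = {s.verts k.castSucc, s.verts k.succ})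
    (ht : ∀ k, t.eds k = {t.verts k.castSucc, t.verts k.succ})
    (h : List.ofFn s.verts = List.ofFn t.verts) : s = t := by
  obtain ⟨len, f, E⟩ := s
  obtain ⟨len', f', E'⟩ := t
  obtain rfl : len = len' := by simpa using congrArg List.length h
  obtain rfl : f = f' := List.ofFn_injective h
  congr
  funext k
  exact (hs k).trans (ht k).symm

open Classical in
noncomputable def pairHypergraph (T : SimpleGraph (Fin n)) : Finset (Finset (Fin n)) :=
  {e | ∃ x y, T.Adj x y ∧ e = {x, y}}

lemma mem_pairHypergraph {e : Finset (Fin n)} :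
    e ∈ pairHypergraph T ↔ ∃ x y, T.Adj x y ∧ e = {x, y} := by
  simp [pairHypergraph]

lemma IsSimpleWalk.adj_and_eds_eq {s : WalkData n} (hs : IsSimpleWalk (pairHypergraph T) v w s)
    (k : Fin s.len) :
    T.Adj (s.verts k.castSucc) (s.verts k.succ) ∧
      s.eds k = {s.verts k.castSucc, s.verts k.succ} := by
  obtain ⟨he, h₁, h₂⟩ := hs.2.2.2.2 k
  obtain ⟨x, y, hxy, hexy⟩ := mem_pairHypergraph.1 he
  have hne : s.verts k.castSucc ≠ s.verts k.succ :=
    hs.2.2.1.ne Fin.castSucc_lt_succ.ne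
  rw [hexy, Finset.mem_insert, Finset.mem_singleton] at h₁ h₂
  rw [hexy]
  rcases h₁ with h₁ | h₁ <;> rcases h₂ with h₂ | h₂ <;> rw [h₁, h₂] at hne ⊢
  · exact absurd rfl hne
  · exact ⟨hxy, rfl⟩
  · exact ⟨hxy.symm, Finset.pair_comm x y⟩
  · exact absurd rfl hne

lemma isSimpleWalk_ofVerts {len : ℕ} {f : Fin (len + 1) → Fin n} (h₀ : f 0 = v)
    (hlast : f (Fin.last len) = w) (hf : Injective f)
    (hadj : ∀ k : Fin len, T.Adj (f k.castSucc) (f k.succ)) :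
    IsSimpleWalk (pairHypergraph T) v w (WalkData.ofVerts f) :=
  ⟨h₀, hlast, hf, hf.pair_castSucc_succ, fun k =>
    ⟨mem_pairHypergraph.2 ⟨_, _, hadj k, rfl⟩, by simp [WalkData.ofVerts],
      by simp [WalkData.ofVerts]⟩⟩

lemma exists_isSimpleWalk_of_reachable (h : T.Reachable v w) :
    ∃ s, IsSimpleWalk (pairHypergraph T) v w s := by
  obtain ⟨p, hp⟩ := h.exists_isPath
  refine ⟨WalkData.ofVerts fun k : Fin (p.length + 1) => p.getVert k,
    isSimpleWalk_ofVerts (by simp) (by simp) (fun i j hij => ?_) fun k => ?_⟩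
  · exact Fin.ext (hp.getVert_injOn (by simp; omega) (by simp; omega) hij)
  · simpa using p.adj_getVert_succ k.2

lemma IsSimpleWalk.eq_of_isAcyclic (hT : T.IsAcyclic) {s t : WalkData n}
    (hs : IsSimpleWalk (pairHypergraph T) v w s) (ht : IsSimpleWalk (pairHypergraph T) v w t) :
    s = t := by
  refine WalkData.eq_of_ofFn_verts_eq (fun k => (hs.adj_and_eds_eq k).2)
    (fun k => (ht.adj_and_eds_eq k).2) (hT.eq_of_isChain_of_nodup (by simp) (by simp) ?_ ?_
      (List.nodup_ofFn.2 hs.2.2.1) (List.nodup_ofFn.2 ht.2.2.1) ?_ ?_)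
  · exact List.isChain_ofFn.2 fun i hi => (hs.adj_and_eds_eq ⟨i, by omega⟩).1
  · exact List.isChain_ofFn.2 fun i hi => (ht.adj_and_eds_eq ⟨i, by omega⟩).1
  · simp only [List.head_ofFn]
    exact hs.1.trans ht.1.symm
  · rw [List.getLast_ofFn_succ, List.getLast_ofFn_succ]
    exact hs.2.1.trans ht.2.1.symm

theorem isHypertree_pairHypergraph (hT : T.IsAcyclic) (hconn : T.Preconnected) :
    IsHypertree (pairHypergraph T) := by
  refine ⟨fun e he => ?_, fun v w => existsUnique_of_exists_of_unique
    (exists_isSimpleWalk_of_reachable (hconn v w)) fun _ _ => IsSimpleWalk.eq_of_isAcyclic hT⟩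
  obtain ⟨x, y, hxy, rfl⟩ := mem_pairHypergraph.1 he
  exact (Finset.card_pair hxy.ne).ge

lemma carries_pairHypergraph {a : Fin n} {A : Finset (Fin n)}
    (hT : ∀ x y, T.Adj x y → ¬Separates a A x y) : Carries (pairHypergraph T) a A := by
  intro d hd j hj _ s hs
  by_contra! hna
  have := mem_iff_of_forall_not_separates (fun k => hT _ _ (hs.adj_and_eds_eq k).1) hna
    (Fin.last _)
  rw [hs.1, hs.2.1] at this
  exact hj (this.1 hd)

end Hypertree

/-- If the partial conjugations `x_{i₁,D₁}, …, x_{i_p,D_p}` pairwise commute in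
`Out⁰(Wₙ)` (i.e. each pairwise commutator of the corresponding automorphisms is
inner), then there is a hypertree on `[n]` carrying all of them. -/
theorem stmt15 (n p : ℕ) (i : Fin p → Fin n) (D : Fin p → Finset (Fin n))
    (hd : ∀ k, i k ∉ D k)
    (φ : Fin p → (W n ≃* W n)) (hpc : ∀ k, IsPC (φ k) (i k) (D k))
    (hcomm : ∀ k l : Fin p, ∃ w : W n, ∀ x : W n,
      (φ k) ((φ l) x) = w * (φ l) ((φ k) x) * w⁻¹) :
    ∃ E : Finset (Finset (Fin n)), IsHypertree E ∧ ∀ k, Carries E (i k) (D k) := by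
  have hcompat : ∀ k l, Compatible (i k) (D k) (i l) (D l) := fun k l =>
    have ⟨_, hw⟩ := hcomm k l
    compatible_of_isPC (hpc k) (hpc l) (hd k) (hd l) hw
  obtain ⟨T, hTle, hT, hreach⟩ := (allowedGraph i D).exists_isAcyclic_reachable_eq_le
  have hconn : T.Preconnected := by
    rw [Preconnected, hreach]
    exact allowedGraph_preconnected hcompat
  exact ⟨pairHypergraph T, isHypertree_pairHypergraph hT hconn,
    fun k => carries_pairHypergraph fun _ _ hxy => (hTle hxy).2 k⟩
end

section
/- The map φ from Out^0(W_n) to Out^0(W_4) defined on partial conjugation generators by sending x_{i,D} to the identity if i ≥ 5, or if D ⊆ F, or if D^c ⊆ F (where F = {5,...,n}), and to y_{i, D∖F} otherwise, respects the defining relations (R1), (R2), (R3) of Out^0(W_n), and hence extends to a surjective group homomorphism; moreover the map ψ: Out^0(W_4) → Out^0(W_n) sending y_{i,D} to x_{i,D} is a section of φ, so Out^0(W_n) splits as a semidirect product with Out^0(W_4) as a quotient and a subgroup. -/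
/-- The smallest index of `[n]` different from `i` (with `[n]` realized as `Fin n`). -/
def mmin {n : ℕ} (i : Fin n) : Fin n :=
  if (i : ℕ) = 0 then ⟨1 % n, Nat.mod_lt 1 i.pos⟩ else ⟨0, i.pos⟩

/-- The indexing set of Mühlherr's generating set `𝒫⁰` for `Out⁰(Wₙ)`: pairs of an
acting letter `i` and a nonempty domain `D ⊆ [n] ∖ {i, j}`, where `j` is the
smallest index different from `i`. -/
structure PCIdx (n : ℕ) where
  i : Fin n
  D : Finset (Fin n)
  hne : D.Nonempty
  hi : i ∉ D
  hm : mmin i ∉ D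

/-- The extended domain `D̃ = D ∪ {i}`. -/
def tD {n : ℕ} (g : PCIdx n) : Finset (Fin n) := insert g.i g.D

/-- The extended complementary domain `D̃ᶜ = ([n] ∖ (D ∪ {i})) ∪ {i}`. -/
def tDc {n : ℕ} (g : PCIdx n) : Finset (Fin n) := insert g.i ((insert g.i g.D)ᶜ)

/-- Mühlherr's relations for `Out⁰(Wₙ)`: (R1) each generator is an involution;
(R2) generators with the same acting letter compose via symmetric difference of
domains; (R3) generators whose extended domains satisfy one of the disjointness
conditions commute. -/
def out0Rels (n : ℕ) : Set (FreeGroup (PCIdx n)) :=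
  {r | ∃ g : PCIdx n, r = FreeGroup.of g * FreeGroup.of g} ∪
  {r | ∃ g g' g'' : PCIdx n, g.i = g'.i ∧ g''.i = g.i ∧
        g''.D = (g.D ∪ g'.D) \ (g.D ∩ g'.D) ∧
        r = FreeGroup.of g * FreeGroup.of g' * (FreeGroup.of g'')⁻¹} ∪
  {r | ∃ g g' : PCIdx n, g.i ≠ g'.i ∧
        (tD g ∩ tD g' = ∅ ∨ tDc g ∩ tD g' = ∅ ∨ tD g ∩ tDc g' = ∅) ∧
        r = FreeGroup.of g * FreeGroup.of g' * (FreeGroup.of g)⁻¹ * (FreeGroup.of g')⁻¹}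

/-- `Out⁰(Wₙ)`, via Mühlherr's presentation. -/
abbrev Out0P (n : ℕ) := PresentedGroup (out0Rels n)

/-- The subset `F = {5, …, n}` of `[n]` (indices `≥ 4` of `Fin n`). -/
def Fbig (n : ℕ) : Finset (Fin n) := Finset.univ.filter fun f => 4 ≤ (f : ℕ)

/-- The generators sent to the identity by `φ_{5⁺}`: those with acting letter `≥ 5`,
or with `D ⊆ F`, or with `Dᶜ ⊆ F` (where `Dᶜ = [n] ∖ (D ∪ {i})`). -/
def kill {n : ℕ} (g : PCIdx n) : Prop :=
  4 ≤ (g.i : ℕ) ∨ g.D ⊆ Fbig n ∨ ((insert g.i g.D)ᶜ : Finset (Fin n)) ⊆ Fbig n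

namespace Stmt19Aux

open Finset

/-! ### Generic presented-group relation lemmas -/

lemma relOne' {α : Type*} {rels : Set (FreeGroup α)} {r : FreeGroup α} (hr : r ∈ rels) :
    (PresentedGroup.mk rels) r = 1 :=
  (QuotientGroup.eq_one_iff r).2 (Subgroup.subset_normalClosure hr)

lemma mk_of {α : Type*} {rels : Set (FreeGroup α)} (x : α) :
    (PresentedGroup.mk rels) (FreeGroup.of x) = PresentedGroup.of x := rfl

lemma rel1 {m : ℕ} (g : PCIdx m) :
    (PresentedGroup.of g : Out0P m) * PresentedGroup.of g = 1 := by
  have h0 := relOne' (rels := out0Rels m)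
    (Set.mem_union_left _ (Set.mem_union_left _ ⟨g, rfl⟩))
  simpa [map_mul, mk_of] using h0

lemma rel2 {m : ℕ} (g g' g'' : PCIdx m) (h1 : g.i = g'.i) (h2 : g''.i = g.i)
    (h3 : g''.D = (g.D ∪ g'.D) \ (g.D ∩ g'.D)) :
    (PresentedGroup.of g : Out0P m) * PresentedGroup.of g' = PresentedGroup.of g'' := by
  have h0 := relOne' (rels := out0Rels m)
    (Set.mem_union_left _ (Set.mem_union_right _ ⟨g, g', g'', h1, h2, h3, rfl⟩))
  simp only [map_mul, map_inv, mk_of] at h0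
  rwa [mul_inv_eq_one] at h0

lemma rel3 {m : ℕ} (g g' : PCIdx m) (h1 : g.i ≠ g'.i)
    (h2 : tD g ∩ tD g' = ∅ ∨ tDc g ∩ tD g' = ∅ ∨ tD g ∩ tDc g' = ∅) :
    (PresentedGroup.of g : Out0P m) * PresentedGroup.of g' =
      PresentedGroup.of g' * PresentedGroup.of g := by
  have h0 := relOne' (rels := out0Rels m)
    (Set.mem_union_right _ ⟨g, g', h1, h2, rfl⟩)
  simp only [map_mul, map_inv, mk_of] at h0
  rw [mul_inv_eq_one, mul_inv_eq_iff_eq_mul] at h0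
  exact h0

lemma PCIdx.ext' {m : ℕ} {a b : PCIdx m} (h1 : a.i = b.i) (h2 : a.D = b.D) : a = b := by
  cases a; cases b; simp_all

/-! ### mmin lemmas -/

lemma mmin_val {m : ℕ} (i : Fin m) (hm : 2 ≤ m) :
    (mmin i : ℕ) = if (i : ℕ) = 0 then 1 else 0 := by
  unfold mmin
  split <;> simp [Nat.mod_eq_of_lt (show 1 < m by omega)]

lemma mmin_ne {m : ℕ} (i : Fin m) (hm : 2 ≤ m) : mmin i ≠ i := by
  intro e
  have hv := congrArg Fin.val e
  rw [mmin_val i hm] at hv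
  split at hv <;> omega

lemma mmin_le_one {m : ℕ} (i : Fin m) (hm : 2 ≤ m) : (mmin i : ℕ) ≤ 1 := by
  rw [mmin_val i hm]; split <;> omega

variable {n : ℕ}

lemma castLE_mmin (h : 4 ≤ n) (i : Fin 4) :
    Fin.castLE h (mmin i) = mmin (Fin.castLE h i) := by
  apply Fin.ext
  rw [Fin.coe_castLE, mmin_val i (by omega), mmin_val _ (by omega), Fin.coe_castLE]



/-! ### Restriction `sD` and extension `uD` of domains -/

def sD (h : 4 ≤ n) (D : Finset (Fin n)) : Finset (Fin 4) :=
  Finset.univ.filter fun v => Fin.castLE h v ∈ D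

def uD (h : 4 ≤ n) (D4 : Finset (Fin 4)) : Finset (Fin n) :=
  D4.image (Fin.castLE h)

@[simp] lemma mem_sD {h : 4 ≤ n} {D : Finset (Fin n)} {v : Fin 4} :
    v ∈ sD h D ↔ Fin.castLE h v ∈ D := by simp [sD]

@[simp] lemma sD_union (h : 4 ≤ n) (D D' : Finset (Fin n)) :
    sD h (D ∪ D') = sD h D ∪ sD h D' := by ext v; simp

@[simp] lemma sD_inter (h : 4 ≤ n) (D D' : Finset (Fin n)) :
    sD h (D ∩ D') = sD h D ∩ sD h D' := by ext v; simp

@[simp] lemma sD_sdiff (h : 4 ≤ n) (D D' : Finset (Fin n)) :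
    sD h (D \ D') = sD h D \ sD h D' := by ext v; simp

@[simp] lemma sD_compl (h : 4 ≤ n) (D : Finset (Fin n)) :
    sD h Dᶜ = (sD h D)ᶜ := by ext v; simp

@[simp] lemma sD_empty (h : 4 ≤ n) : sD h (∅ : Finset (Fin n)) = ∅ := by ext v; simp

lemma sD_insert (h : 4 ≤ n) (D : Finset (Fin n)) (w : Fin n) (hw : (w : ℕ) < 4) :
    sD h (insert w D) = insert ⟨(w : ℕ), hw⟩ (sD h D) := by
  ext v
  simp [Fin.ext_iff]

@[simp] lemma sD_uD (h : 4 ≤ n) (D4 : Finset (Fin 4)) : sD h (uD h D4) = D4 := by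
  ext v
  simp [uD, (Fin.castLE_injective h).mem_finset_image]

lemma mem_uD {h : 4 ≤ n} {D4 : Finset (Fin 4)} {v' : Fin n} :
    v' ∈ uD h D4 ↔ ∃ v ∈ D4, Fin.castLE h v = v' := Finset.mem_image

lemma castLE_mem_uD {h : 4 ≤ n} {D4 : Finset (Fin 4)} {v : Fin 4} :
    Fin.castLE h v ∈ uD h D4 ↔ v ∈ D4 :=
  (Fin.castLE_injective h).mem_finset_image

lemma mem_Fbig {v : Fin n} : v ∈ Fbig n ↔ 4 ≤ (v : ℕ) := by simp [Fbig]


/-! ### proj and kill -/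

lemma kill_iff (h : 4 ≤ n) {g : PCIdx n} (hi : (g.i : ℕ) < 4) :
    kill g ↔ sD h g.D = ∅ := by
  constructor
  · rintro (h1 | h2 | h3)
    · omega
    · ext v
      simp only [mem_sD, Finset.notMem_empty, iff_false]
      intro hv
      have h4 := mem_Fbig.1 (h2 hv)
      have h5 := v.isLt
      simp only [Fin.coe_castLE] at h4
      omega
    · exfalso
      have hmem : mmin g.i ∈ (insert g.i g.D)ᶜ := by
        simp only [Finset.mem_compl, Finset.mem_insert, not_or]
        exact ⟨mmin_ne g.i (by omega), g.hm⟩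
      have h4 := mem_Fbig.1 (h3 hmem)
      have h5 := mmin_le_one g.i (show 2 ≤ n by omega)
      omega
  · intro he
    right; left
    intro v hv
    rw [mem_Fbig]
    by_contra hc
    push_neg at hc
    have : (⟨(v : ℕ), hc⟩ : Fin 4) ∈ sD h g.D := by
      rw [mem_sD]
      have e : Fin.castLE h (⟨(v : ℕ), hc⟩ : Fin 4) = v := rfl
      rw [e]; exact hv
    simp [he] at this

lemma not_kill_lt {g : PCIdx n} (hk : ¬ kill g) : (g.i : ℕ) < 4 := by
  by_contra hc; exact hk (Or.inl (by omega))

lemma not_kill_ne (h : 4 ≤ n) {g : PCIdx n} (hk : ¬ kill g) : (sD h g.D).Nonempty := by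
  rw [Finset.nonempty_iff_ne_empty]
  intro he
  exact hk ((kill_iff h (not_kill_lt hk)).2 he)

def proj (h : 4 ≤ n) (g : PCIdx n) (hk : ¬ kill g) : PCIdx 4 where
  i := ⟨(g.i : ℕ), not_kill_lt hk⟩
  D := sD h g.D
  hne := not_kill_ne h hk
  hi := by
    rw [mem_sD]
    have e : Fin.castLE h (⟨(g.i : ℕ), not_kill_lt hk⟩ : Fin 4) = g.i := rfl
    rw [e]; exact g.hi
  hm := by
    rw [mem_sD, castLE_mmin]
    have e : Fin.castLE h (⟨(g.i : ℕ), not_kill_lt hk⟩ : Fin 4) = g.i := rfl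
    rw [e]; exact g.hm

@[simp] lemma proj_i (h : 4 ≤ n) (g : PCIdx n) (hk : ¬ kill g) :
    ((proj h g hk).i : ℕ) = (g.i : ℕ) := rfl

@[simp] lemma proj_D (h : 4 ≤ n) (g : PCIdx n) (hk : ¬ kill g) :
    (proj h g hk).D = sD h g.D := rfl

lemma sD_tD (h : 4 ≤ n) (g : PCIdx n) (hk : ¬ kill g) :
    sD h (tD g) = tD (proj h g hk) := by
  rw [tD, tD, sD_insert h _ _ (not_kill_lt hk), proj_D]
  rfl

lemma sD_tDc (h : 4 ≤ n) (g : PCIdx n) (hk : ¬ kill g) :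
    sD h (tDc g) = tDc (proj h g hk) := by
  rw [tDc, tDc, sD_insert h _ _ (not_kill_lt hk), sD_compl,
    sD_insert h _ _ (not_kill_lt hk), proj_D]
  rfl


/-! ### The map Φ -/

open Classical in
noncomputable def phiGen (h : 4 ≤ n) (g : PCIdx n) : Out0P 4 :=
  if hk : kill g then 1 else PresentedGroup.of (proj h g hk)

lemma phiGen_pos (h : 4 ≤ n) {g : PCIdx n} (hk : kill g) : phiGen h g = 1 := by
  rw [phiGen, dif_pos hk]

lemma phiGen_neg (h : 4 ≤ n) {g : PCIdx n} (hk : ¬ kill g) :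
    phiGen h g = PresentedGroup.of (proj h g hk) := by
  rw [phiGen, dif_neg hk]

lemma symmdiff_empty {α : Type*} [DecidableEq α] {a b : Finset α}
    (he : (a ∪ b) \ (a ∩ b) = ∅) : a = b := by
  rw [Finset.sdiff_eq_empty_iff_subset] at he
  apply Finset.Subset.antisymm
  · exact fun x hx => (Finset.mem_inter.1 (he (Finset.mem_union_left _ hx))).2
  · exact fun x hx => (Finset.mem_inter.1 (he (Finset.mem_union_right _ hx))).1

lemma phi_rels (h : 4 ≤ n) : ∀ r ∈ out0Rels n, FreeGroup.lift (phiGen h) r = 1 := by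
  rintro r ((⟨g, rfl⟩ | ⟨g, g', g'', hii', hi'', hD, rfl⟩) | ⟨g, g', hne, hdisj, rfl⟩)
  · -- R1
    simp only [map_mul, FreeGroup.lift_apply_of]
    by_cases hk : kill g
    · simp [phiGen_pos h hk]
    · rw [phiGen_neg h hk]; exact rel1 _
  · -- R2
    simp only [map_mul, map_inv, FreeGroup.lift_apply_of, mul_inv_eq_one]
    by_cases hbig : 4 ≤ (g.i : ℕ)
    · have k1 : kill g := Or.inl hbig
      have k2 : kill g' := Or.inl (by rw [← hii']; exact hbig)
      have k3 : kill g'' := Or.inl (by rw [hi'']; exact hbig)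
      simp [phiGen_pos h k1, phiGen_pos h k2, phiGen_pos h k3]
    · push_neg at hbig
      have hlt' : (g'.i : ℕ) < 4 := by rw [← hii']; exact hbig
      have hlt'' : (g''.i : ℕ) < 4 := by rw [hi'']; exact hbig
      have hsd : sD h g''.D = (sD h g.D ∪ sD h g'.D) \ (sD h g.D ∩ sD h g'.D) := by
        rw [hD, sD_sdiff, sD_union, sD_inter]
      by_cases hk : kill g <;> by_cases hk' : kill g'
      · -- both killed
        have e1 := (kill_iff h hbig).1 hk
        have e2 := (kill_iff h hlt').1 hk'
        have : kill g'' := (kill_iff h hlt'').2 (by rw [hsd, e1, e2]; simp)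
        simp [phiGen_pos h hk, phiGen_pos h hk', phiGen_pos h this]
      · -- g killed, g' not
        have e1 := (kill_iff h hbig).1 hk
        have e3 : sD h g''.D = sD h g'.D := by rw [hsd, e1]; simp
        have hk'' : ¬ kill g'' := by
          rw [kill_iff h hlt'', e3]
          exact Finset.nonempty_iff_ne_empty.1 (not_kill_ne h hk')
        rw [phiGen_pos h hk, phiGen_neg h hk', phiGen_neg h hk'', one_mul]
        congr 1
        exact (PCIdx.ext' (Fin.ext (by simp [hi''.trans hii'])) (by simp [e3])).symm
      · -- g' killed, g not
        have e2 := (kill_iff h hlt').1 hk'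
        have e3 : sD h g''.D = sD h g.D := by rw [hsd, e2]; simp
        have hk'' : ¬ kill g'' := by
          rw [kill_iff h hlt'', e3]
          exact Finset.nonempty_iff_ne_empty.1 (not_kill_ne h hk)
        rw [phiGen_pos h hk', phiGen_neg h hk, phiGen_neg h hk'', mul_one]
        congr 1
        exact (PCIdx.ext' (Fin.ext (by simp [hi''])) (by simp [e3])).symm
      · -- neither killed
        by_cases hk'' : kill g''
        · have e3 := (kill_iff h hlt'').1 hk''
          rw [hsd] at e3
          have heq : proj h g hk = proj h g' hk' :=
            PCIdx.ext' (Fin.ext (by simp [hii'])) (by simp [symmdiff_empty e3])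
          rw [phiGen_pos h hk'', phiGen_neg h hk, phiGen_neg h hk', heq]
          exact rel1 _
        · rw [phiGen_neg h hk, phiGen_neg h hk', phiGen_neg h hk'']
          exact rel2 _ _ _ (Fin.ext (by simp [hii'])) (Fin.ext (by simp [hi''])) (by simp [hsd])
  · -- R3
    simp only [map_mul, map_inv, FreeGroup.lift_apply_of, mul_inv_eq_one, mul_inv_eq_iff_eq_mul]
    by_cases hk : kill g
    · simp [phiGen_pos h hk]
    by_cases hk' : kill g'
    · simp [phiGen_pos h hk']
    rw [phiGen_neg h hk, phiGen_neg h hk']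
    apply rel3
    · intro e
      have : (g.i : ℕ) = (g'.i : ℕ) := by
        have := congrArg Fin.val e
        simpa using this
      exact hne (Fin.ext this)
    · rcases hdisj with h1 | h1 | h1
      · left
        rw [← sD_tD h g hk, ← sD_tD h g' hk', ← sD_inter, h1, sD_empty]
      · right; left
        rw [← sD_tDc h g hk, ← sD_tD h g' hk', ← sD_inter, h1, sD_empty]
      · right; right
        rw [← sD_tD h g hk, ← sD_tDc h g' hk', ← sD_inter, h1, sD_empty]


/-! ### The section Ψ -/

def up (h : 4 ≤ n) (g4 : PCIdx 4) : PCIdx n where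
  i := Fin.castLE h g4.i
  D := uD h g4.D
  hne := g4.hne.image _
  hi := by rw [castLE_mem_uD]; exact g4.hi
  hm := by
    rw [← castLE_mmin, castLE_mem_uD]
    exact g4.hm

lemma uD_inter (h : 4 ≤ n) (A B : Finset (Fin 4)) : uD h (A ∩ B) = uD h A ∩ uD h B :=
  Finset.image_inter _ _ (Fin.castLE_injective h)

@[simp] lemma uD_empty (h : 4 ≤ n) : uD h (∅ : Finset (Fin 4)) = ∅ := Finset.image_empty _

lemma uD_tD (h : 4 ≤ n) (g4 : PCIdx 4) : tD (up h g4) = uD h (tD g4) := by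
  show insert (Fin.castLE h g4.i) (uD h g4.D) = uD h (insert g4.i g4.D)
  rw [uD, uD, Finset.image_insert]

lemma tDc_up_inter (h : 4 ≤ n) {g4 g4' : PCIdx 4} (hd : tDc g4 ∩ tD g4' = ∅) :
    tDc (up h g4) ∩ tD (up h g4') = ∅ := by
  rw [Finset.eq_empty_iff_forall_notMem]
  intro x hx
  rw [Finset.mem_inter, uD_tD h g4'] at hx
  obtain ⟨hx1, hx2⟩ := hx
  obtain ⟨v, hv, rfl⟩ := mem_uD.1 hx2
  have hvc : v ∈ tDc g4 := by
    rcases Finset.mem_insert.1 hx1 with he | hc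
    · have : v = g4.i := Fin.castLE_injective h (by rw [he]; rfl)
      rw [this, tDc]
      exact Finset.mem_insert_self _ _
    · rw [Finset.mem_compl] at hc
      rw [tDc]
      apply Finset.mem_insert_of_mem
      rw [Finset.mem_compl]
      intro hvm
      apply hc
      rw [show (insert (up h g4).i (up h g4).D) = uD h (tD g4) from uD_tD h g4]
      exact castLE_mem_uD.2 hvm
  have : v ∈ tDc g4 ∩ tD g4' := Finset.mem_inter.2 ⟨hvc, hv⟩
  rw [hd] at this
  exact absurd this (Finset.notMem_empty v)

lemma psi_rels (h : 4 ≤ n) :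
    ∀ r ∈ out0Rels 4, FreeGroup.lift (fun g4 => (PresentedGroup.of (up h g4) : Out0P n)) r = 1 := by
  rintro r ((⟨g, rfl⟩ | ⟨g, g', g'', hii', hi'', hD, rfl⟩) | ⟨g, g', hne, hdisj, rfl⟩)
  · simp only [map_mul, FreeGroup.lift_apply_of]
    exact rel1 _
  · simp only [map_mul, map_inv, FreeGroup.lift_apply_of, mul_inv_eq_one]
    apply rel2
    · show Fin.castLE h g.i = Fin.castLE h g'.i
      rw [hii']
    · show Fin.castLE h g''.i = Fin.castLE h g.i
      rw [hi'']
    · show uD h g''.D = (uD h g.D ∪ uD h g'.D) \ (uD h g.D ∩ uD h g'.D)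
      rw [hD, uD, uD, uD, Finset.image_sdiff _ _ (Fin.castLE_injective h),
        Finset.image_union, Finset.image_inter _ _ (Fin.castLE_injective h)]
  · simp only [map_mul, map_inv, FreeGroup.lift_apply_of, mul_inv_eq_one, mul_inv_eq_iff_eq_mul]
    apply rel3
    · exact fun e => hne (Fin.castLE_injective h e)
    · rcases hdisj with h1 | h1 | h1
      · left
        rw [uD_tD, uD_tD, ← uD_inter, h1, uD_empty]
      · right; left
        exact tDc_up_inter h h1
      · right; right
        rw [Finset.inter_comm] at h1 ⊢
        exact tDc_up_inter h h1

lemma not_kill_up (h : 4 ≤ n) (g4 : PCIdx 4) : ¬ kill (up h g4) := by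
  intro hk
  have hlt : ((up h g4).i : ℕ) < 4 := by
    show ((Fin.castLE h g4.i : Fin n) : ℕ) < 4
    simp [g4.i.isLt]
  have := (kill_iff h hlt).1 hk
  rw [show (up h g4).D = uD h g4.D from rfl, sD_uD] at this
  exact Finset.nonempty_iff_ne_empty.1 g4.hne this

lemma proj_up (h : 4 ≤ n) (g4 : PCIdx 4) : proj h (up h g4) (not_kill_up h g4) = g4 := by
  apply PCIdx.ext'
  · exact Fin.ext rfl
  · rw [proj_D]
    exact sD_uD h g4.D

end Stmt19Aux

/-- The assignment `x_{i,D} ↦ 1` (if `i ≥ 5`, `D ⊆ F`, or `Dᶜ ⊆ F`) and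
`x_{i,D} ↦ y_{i,D∖F}` otherwise respects Mühlherr's relations (R1), (R2), (R3), and
hence extends to a surjective homomorphism `Φ : Out⁰(Wₙ) → Out⁰(W₄)`; moreover
`y_{i,D} ↦ x_{i,D}` defines a section `Ψ` of `Φ`, so `Out⁰(Wₙ)` splits as a
semidirect product with `Out⁰(W₄)` both a quotient and a subgroup. -/
theorem stmt19 (n : ℕ) (hn : 5 ≤ n) :
    ∃ Φ : Out0P n →* Out0P 4,
      (∀ g : PCIdx n, kill g → Φ (PresentedGroup.of g) = 1) ∧
      (∀ g : PCIdx n, ¬ kill g → ∃ g4 : PCIdx 4,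
          ((g4.i : ℕ) = (g.i : ℕ)) ∧
          (∀ v : Fin 4, v ∈ g4.D ↔ ∃ v' ∈ g.D, (v' : ℕ) = (v : ℕ)) ∧
          Φ (PresentedGroup.of g) = PresentedGroup.of g4) ∧
      Function.Surjective Φ ∧
      ∃ Ψ : Out0P 4 →* Out0P n,
        (∀ g4 : PCIdx 4, ∃ g : PCIdx n,
            ((g.i : ℕ) = (g4.i : ℕ)) ∧
            (∀ v' : Fin n, v' ∈ g.D ↔ ∃ v ∈ g4.D, (v : ℕ) = (v' : ℕ)) ∧
            Ψ (PresentedGroup.of g4) = PresentedGroup.of g) ∧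
        Φ.comp Ψ = MonoidHom.id (Out0P 4) := by
  have h4 : 4 ≤ n := by omega
  have hcomp : (PresentedGroup.toGroup (Stmt19Aux.phi_rels h4)).comp
      (PresentedGroup.toGroup (Stmt19Aux.psi_rels h4)) = MonoidHom.id (Out0P 4) := by
    apply PresentedGroup.ext
    intro g4
    simp only [MonoidHom.comp_apply, MonoidHom.id_apply, PresentedGroup.toGroup.of]
    rw [Stmt19Aux.phiGen_neg h4 (Stmt19Aux.not_kill_up h4 g4), Stmt19Aux.proj_up]
  refine ⟨PresentedGroup.toGroup (Stmt19Aux.phi_rels h4), ?_, ?_, ?_,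
    PresentedGroup.toGroup (Stmt19Aux.psi_rels h4), ?_, hcomp⟩
  · intro g hk
    rw [PresentedGroup.toGroup.of, Stmt19Aux.phiGen_pos h4 hk]
  · intro g hk
    refine ⟨Stmt19Aux.proj h4 g hk, rfl, ?_, ?_⟩
    · intro v
      rw [Stmt19Aux.proj_D, Stmt19Aux.mem_sD]
      constructor
      · intro hv; exact ⟨_, hv, rfl⟩
      · rintro ⟨v', hv', he⟩
        have hvv : Fin.castLE h4 v = v' := Fin.ext he.symm
        rw [hvv]; exact hv'
    · rw [PresentedGroup.toGroup.of, Stmt19Aux.phiGen_neg h4 hk]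
  · intro y
    exact ⟨PresentedGroup.toGroup (Stmt19Aux.psi_rels h4) y,
      by rw [← MonoidHom.comp_apply, hcomp, MonoidHom.id_apply]⟩
  · intro g4
    refine ⟨Stmt19Aux.up h4 g4, rfl, ?_, PresentedGroup.toGroup.of _⟩
    intro v'
    rw [show (Stmt19Aux.up h4 g4).D = Stmt19Aux.uD h4 g4.D from rfl, Stmt19Aux.mem_uD]
    constructor
    · rintro ⟨v, hv, rfl⟩; exact ⟨v, hv, rfl⟩
    · rintro ⟨v, hv, he⟩
      exact ⟨v, hv, Fin.ext he⟩
end
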